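/- arXiv:2112.13087 — 4 statements merged into one kernel-verified Lean document; each statement's English description precedes it below -/
import Mathlib

section
/- Let S = {s_1,...,s_s} and T = {t_1,...,t_k} be disjoint finite sets with |S| = s and |T| = k, k ≥ 1. The number of inner-ordered k-partitions of S ∪ T such that each block contains exactly one element of T equals s! * C(2k+s-1, s). -/
/-- Inner-ordered `k`-partitions of the disjoint union `S ⊔ T` (with `|S| = s`,
`|T| = k`) such that each block contains exactly one element of `T`.  Blocks are
duplicate-free lists (recording the inner linear order), collected in an
(unordered) finset, covering each element exactly once. -/
def InnerOrderedPartitionOneT (s k : ℕ) : Set (Finset (List (Fin s ⊕ Fin k))) :=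
  {P | P.card = k ∧
    (∀ b ∈ P, b.Nodup ∧ (b.filter (fun x => x.isRight)).length = 1) ∧
    (∀ x : Fin s ⊕ Fin k, ∃! b : List (Fin s ⊕ Fin k), b ∈ P ∧ x ∈ b)}


namespace Stmt1Aux

/-! ### Generic list lemmas -/

section Lists
variable {α β : Type*}

lemma filter_isRight_map_inl (u : List α) :
    ((u.map (Sum.inl : α → α ⊕ β)).filter (fun x => x.isRight)) = [] := by
  rw [List.filter_eq_nil_iff]; rintro a ha
  obtain ⟨b, _, rfl⟩ := List.mem_map.mp ha; simp

lemma filter_isRight_block (u : List α) (j : β) (v : List α) :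
    ((u.map Sum.inl ++ Sum.inr j :: v.map Sum.inl).filter (fun x => x.isRight)) = [Sum.inr j] := by
  rw [List.filter_append, filter_isRight_map_inl, List.filter_cons]
  simp [filter_isRight_map_inl]

lemma all_left (b : List (α ⊕ β)) (h : b.filter (fun x => x.isRight) = []) :
    ∃ v : List α, b = v.map Sum.inl := by
  induction b with
  | nil => exact ⟨[], rfl⟩
  | cons x bs ih =>
    cases x with
    | inl a =>
      rw [List.filter_cons] at h
      simp only [Sum.isRight_inl, if_false] at h
      obtain ⟨v, hv⟩ := ih (by simpa using h)
      exact ⟨a :: v, by simp [hv]⟩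
    | inr j => simp [List.filter_cons] at h

lemma exists_decomp (b : List (α ⊕ β)) (h : (b.filter (fun x => x.isRight)).length = 1) :
    ∃ (u : List α) (j : β) (v : List α), b = u.map Sum.inl ++ Sum.inr j :: v.map Sum.inl := by
  induction b with
  | nil => simp at h
  | cons x bs ih =>
    cases x with
    | inl a =>
      rw [List.filter_cons] at h
      simp only [Sum.isRight_inl, if_false] at h
      obtain ⟨u, j, v, huv⟩ := ih (by simpa using h)
      exact ⟨a :: u, j, v, by simp [huv]⟩
    | inr j =>
      rw [List.filter_cons] at h
      simp only [Sum.isRight_inr, if_true] at h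
      have h0 : (bs.filter (fun x => x.isRight)).length = 0 := by simpa using h
      obtain ⟨v, hv⟩ := all_left bs (List.length_eq_zero_iff.mp h0)
      exact ⟨[], j, v, by simp [hv]⟩

lemma takeWhile_block (u : List α) (j : β) (w : List (α ⊕ β)) :
    ((u.map Sum.inl ++ Sum.inr j :: w).takeWhile (fun x => x.isLeft)) = u.map Sum.inl := by
  induction u with
  | nil => simp [List.takeWhile_cons]
  | cons a u ih => simpa [List.takeWhile_cons] using ih

lemma dropWhile_block (u : List α) (j : β) (w : List (α ⊕ β)) :
    ((u.map Sum.inl ++ Sum.inr j :: w).dropWhile (fun x => x.isLeft)) = Sum.inr j :: w := by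
  induction u with
  | nil => simp [List.dropWhile_cons]
  | cons a u ih => simpa [List.dropWhile_cons] using ih

lemma block_inj {u₁ v₁ u₂ v₂ : List α} {j₁ j₂ : β}
    (h : u₁.map Sum.inl ++ Sum.inr j₁ :: v₁.map Sum.inl
        = u₂.map Sum.inl ++ Sum.inr j₂ :: v₂.map Sum.inl) :
    u₁ = u₂ ∧ j₁ = j₂ ∧ v₁ = v₂ := by
  have ht := congrArg (List.takeWhile (fun x : α ⊕ β => x.isLeft)) h
  rw [takeWhile_block, takeWhile_block] at ht
  have hd := congrArg (List.dropWhile (fun x : α ⊕ β => x.isLeft)) h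
  rw [dropWhile_block, dropWhile_block] at hd
  refine ⟨List.map_injective_iff.mpr Sum.inl_injective ht, ?_, ?_⟩
  · exact Sum.inr_injective (List.head_eq_of_cons_eq hd)
  · exact List.map_injective_iff.mpr Sum.inl_injective (List.tail_eq_of_cons_eq hd)

/-! ### splitList -/

def splitList : List ℕ → List α → List (List α)
  | [], _ => []
  | n :: ns, w => w.take n :: splitList ns (w.drop n)

lemma length_splitList (cl : List ℕ) (w : List α) : (splitList cl w).length = cl.length := by
  induction cl generalizing w with
  | nil => rfl
  | cons n ns ih => simp [splitList, ih]

lemma flatten_splitList (cl : List ℕ) (w : List α) :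
    (splitList cl w).flatten = w.take cl.sum := by
  induction cl generalizing w with
  | nil => simp [splitList]
  | cons n ns ih => simp [splitList, ih, List.take_add]

lemma map_length_splitList (cl : List ℕ) (w : List α) (h : cl.sum ≤ w.length) :
    (splitList cl w).map List.length = cl := by
  induction cl generalizing w with
  | nil => rfl
  | cons n ns ih =>
    simp only [List.sum_cons] at h
    simp only [splitList, List.map_cons]
    rw [List.length_take, min_eq_left (by omega), ih _ (by simp; omega)]

lemma splitList_flatten (L : List (List α)) :
    splitList (L.map List.length) L.flatten = L := by
  induction L with
  | nil => rfl
  | cons l L ih =>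
    simp only [List.map_cons, List.flatten_cons, splitList, List.take_left, List.drop_left, ih]

end Lists

end Stmt1Aux

namespace Stmt1Aux

section Main
variable (s k : ℕ)

def Bt := {L : List (List (Fin s)) // L.length = 2 * k ∧ L.flatten.Nodup ∧ ∀ x : Fin s, x ∈ L.flatten}

variable {s k}

def blk (L : Bt s k) (j : Fin k) : List (Fin s ⊕ Fin k) :=
  (L.1.get ⟨2 * j.1, by have := L.2.1; have := j.2; omega⟩).map Sum.inl ++
    Sum.inr j :: (L.1.get ⟨2 * j.1 + 1, by have := L.2.1; have := j.2; omega⟩).map Sum.inl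

lemma get_nodup (L : Bt s k) (i : Fin L.1.length) : (L.1.get i).Nodup :=
  (List.nodup_flatten.mp L.2.2.1).1 _ (L.1.get_mem i)

lemma get_disjoint (L : Bt s k) (i₁ i₂ : Fin L.1.length) (h : i₁ ≠ i₂) :
    List.Disjoint (L.1.get i₁) (L.1.get i₂) := by
  have hp := (List.nodup_flatten.mp L.2.2.1).2
  rw [List.pairwise_iff_get] at hp
  rcases Ne.lt_or_gt h with h' | h'
  · exact hp _ _ h'
  · exact List.disjoint_comm.mp (hp _ _ h')

lemma filter_blk (L : Bt s k) (j : Fin k) :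
    (blk L j).filter (fun x => x.isRight) = [Sum.inr j] :=
  filter_isRight_block _ _ _

lemma blk_injective (L : Bt s k) : Function.Injective (blk L) := by
  intro j₁ j₂ h
  have h2 := congrArg (List.filter (fun x => x.isRight)) h
  rw [filter_blk, filter_blk] at h2
  simpa using h2

lemma mem_blk_inr (L : Bt s k) (j j' : Fin k) : Sum.inr j' ∈ blk L j ↔ j' = j := by
  simp [blk]

lemma nodup_blk (L : Bt s k) (j : Fin k) : (blk L j).Nodup := by
  rw [blk, List.nodup_append]
  refine ⟨(List.nodup_map_iff Sum.inl_injective).mpr (get_nodup L _), ?_, ?_⟩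
  · rw [List.nodup_cons]
    refine ⟨by simp, (List.nodup_map_iff Sum.inl_injective).mpr (get_nodup L _)⟩
  · rintro x hx _ hx' rfl
    obtain ⟨a, ha, rfl⟩ := List.mem_map.mp hx
    rcases List.mem_cons.mp hx' with h | h
    · exact absurd h (by simp)
    · obtain ⟨a', ha', he⟩ := List.mem_map.mp h
      obtain rfl : a' = a := Sum.inl_injective he
      exact get_disjoint L _ _ (by simp [Fin.ext_iff]) ha ha'

def encode (L : Bt s k) : Finset (List (Fin s ⊕ Fin k)) := Finset.image (blk L) Finset.univ

lemma encode_mem (L : Bt s k) : encode L ∈ InnerOrderedPartitionOneT s k := by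
  refine ⟨?_, ?_, ?_⟩
  · rw [encode, Finset.card_image_of_injective _ (blk_injective L), Finset.card_univ,
      Fintype.card_fin]
  · intro b hb
    obtain ⟨j, _, rfl⟩ := Finset.mem_image.mp hb
    exact ⟨nodup_blk L j, by rw [filter_blk]; rfl⟩
  · intro x
    cases x with
    | inr j =>
      refine ⟨blk L j, ⟨Finset.mem_image_of_mem _ (Finset.mem_univ j),
        (mem_blk_inr L j j).mpr rfl⟩, ?_⟩
      rintro b ⟨hbP, hmem⟩
      obtain ⟨j', _, rfl⟩ := Finset.mem_image.mp hbP
      rw [mem_blk_inr] at hmem; rw [hmem]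
    | inl a =>
      have ha := L.2.2.2 a
      rw [List.mem_flatten] at ha
      obtain ⟨l, hl, hal⟩ := ha
      rw [List.mem_iff_get] at hl
      obtain ⟨i, rfl⟩ := hl
      have h2k : L.1.length = 2 * k := L.2.1
      have hik : i.1 / 2 < k := by have := i.2; omega
      obtain ⟨j, hjv⟩ : ∃ j : Fin k, j.1 = i.1 / 2 := ⟨⟨i.1 / 2, hik⟩, rfl⟩
      have hcase : i.1 = 2 * j.1 ∨ i.1 = 2 * j.1 + 1 := by omega
      have hmem : Sum.inl a ∈ blk L j := by
        rw [blk]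
        rcases hcase with hc | hc
        · apply List.mem_append_left
          apply List.mem_map_of_mem
          have : (⟨2 * j.1, by omega⟩ : Fin L.1.length) = i := by
            apply Fin.ext; show 2 * j.1 = i.1; omega
          rwa [this]
        · apply List.mem_append_right
          apply List.mem_cons_of_mem
          apply List.mem_map_of_mem
          have : (⟨2 * j.1 + 1, by omega⟩ : Fin L.1.length) = i := by
            apply Fin.ext; show 2 * j.1 + 1 = i.1; omega
          rwa [this]
      refine ⟨blk L j, ⟨Finset.mem_image_of_mem _ (Finset.mem_univ j), hmem⟩, ?_⟩
      rintro b ⟨hbP, hb⟩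
      obtain ⟨j', _, rfl⟩ := Finset.mem_image.mp hbP
      suffices hjj : j' = j by rw [hjj]
      rw [blk, List.mem_append, List.mem_cons] at hb
      have hb' : (a ∈ L.1.get ⟨2 * j'.1, by omega⟩) ∨ (a ∈ L.1.get ⟨2 * j'.1 + 1, by omega⟩) := by
        rcases hb with h | h
        · obtain ⟨a', ha', he⟩ := List.mem_map.mp h
          obtain rfl : a' = a := Sum.inl_injective he
          exact Or.inl ha'
        · rcases h with h | h
          · exact absurd h (by simp)
          · obtain ⟨a', ha', he⟩ := List.mem_map.mp h
            obtain rfl : a' = a := Sum.inl_injective he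
            exact Or.inr ha'
      rcases hb' with h | h
      · have heq : (⟨2 * j'.1, by omega⟩ : Fin L.1.length) = i := by
          by_contra hne
          exact get_disjoint L _ _ hne h hal
        have hv : 2 * j'.1 = i.1 := congrArg Fin.val heq
        apply Fin.ext
        omega
      · have heq : (⟨2 * j'.1 + 1, by omega⟩ : Fin L.1.length) = i := by
          by_contra hne
          exact get_disjoint L _ _ hne h hal
        have hv : 2 * j'.1 + 1 = i.1 := congrArg Fin.val heq
        apply Fin.ext
        omega

end Main
end Stmt1Aux

namespace Stmt1Aux
section Main2
variable {s k : ℕ}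

lemma encode_injective : Function.Injective (encode (s := s) (k := k)) := by
  intro L₁ L₂ h
  have hblk : ∀ j, blk L₁ j = blk L₂ j := by
    intro j
    have h1 : blk L₁ j ∈ encode L₂ := by
      rw [← h]; exact Finset.mem_image_of_mem _ (Finset.mem_univ j)
    obtain ⟨j', _, hj'⟩ := Finset.mem_image.mp h1
    have h2 := congrArg (List.filter (fun x => x.isRight)) hj'
    rw [filter_blk, filter_blk] at h2
    obtain rfl : j' = j := by simpa using h2
    exact hj'.symm
  apply Subtype.ext
  apply List.ext_get (by rw [L₁.2.1, L₂.2.1])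
  intro i hi₁ hi₂
  have h2k : L₁.1.length = 2 * k := L₁.2.1
  have hik : i / 2 < k := by omega
  obtain ⟨j, hjv⟩ : ∃ j : Fin k, j.1 = i / 2 := ⟨⟨i / 2, hik⟩, rfl⟩
  obtain ⟨hu, -, hv⟩ := block_inj (hblk j)
  rcases (by omega : i = 2 * j.1 ∨ i = 2 * j.1 + 1) with hc | hc
  · have e₁ : (⟨i, hi₁⟩ : Fin L₁.1.length) = ⟨2 * j.1, by omega⟩ := by
      apply Fin.ext; show i = 2 * j.1; omega
    have e₂ : (⟨i, hi₂⟩ : Fin L₂.1.length) = ⟨2 * j.1, by have := L₂.2.1; omega⟩ := by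
      apply Fin.ext; show i = 2 * j.1; omega
    rw [e₁, e₂]; exact hu
  · have e₁ : (⟨i, hi₁⟩ : Fin L₁.1.length) = ⟨2 * j.1 + 1, by omega⟩ := by
      apply Fin.ext; show i = 2 * j.1 + 1; omega
    have e₂ : (⟨i, hi₂⟩ : Fin L₂.1.length) = ⟨2 * j.1 + 1, by have := L₂.2.1; omega⟩ := by
      apply Fin.ext; show i = 2 * j.1 + 1; omega
    rw [e₁, e₂]; exact hv

lemma encode_surjective (P : Finset (List (Fin s ⊕ Fin k)))
    (hP : P ∈ InnerOrderedPartitionOneT s k) : ∃ L : Bt s k, encode L = P := by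
  classical
  obtain ⟨h1, h2, h3⟩ := hP
  set b : Fin k → List (Fin s ⊕ Fin k) :=
    fun j => (h3 (Sum.inr j)).exists.choose with hbdef
  have hbP : ∀ j, b j ∈ P := fun j => (h3 (Sum.inr j)).exists.choose_spec.1
  have hbmem : ∀ j, Sum.inr j ∈ b j := fun j => (h3 (Sum.inr j)).exists.choose_spec.2
  have hdec : ∀ j, ∃ (u : List (Fin s)) (v : List (Fin s)),
      b j = u.map Sum.inl ++ Sum.inr j :: v.map Sum.inl := by
    intro j
    obtain ⟨u, jj, v, huv⟩ := exists_decomp (b j) (h2 _ (hbP j)).2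
    have hm : Sum.inr j ∈ (b j).filter (fun x => x.isRight) :=
      List.mem_filter.mpr ⟨hbmem j, by simp⟩
    rw [huv, filter_isRight_block] at hm
    obtain rfl : j = jj := by simpa using hm
    exact ⟨u, v, huv⟩
  choose u v huv using hdec
  have hPmem : ∀ bb ∈ P, ∃ j, bb = b j := by
    intro bb hbb
    obtain ⟨u', jj, v', huv'⟩ := exists_decomp bb (h2 _ hbb).2
    refine ⟨jj, (h3 (Sum.inr jj)).unique ⟨hbb, ?_⟩ ⟨hbP jj, hbmem jj⟩⟩
    rw [huv']; simp
  have hhalf : ∀ i : Fin (2 * k), i.1 / 2 < k := fun i => by have := i.2; omega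
  set g : Fin (2 * k) → List (Fin s) := fun i =>
    if i.1 % 2 = 0 then u ⟨i.1 / 2, hhalf i⟩ else v ⟨i.1 / 2, hhalf i⟩ with hgdef
  have hg_even : ∀ (j : Fin k) (h : 2 * j.1 < 2 * k), g ⟨2 * j.1, h⟩ = u j := by
    intro j h
    simp only [hgdef, Nat.mul_mod_right, if_pos]
    congr 1
    apply Fin.ext; show 2 * j.1 / 2 = j.1; omega
  have hg_odd : ∀ (j : Fin k) (h : 2 * j.1 + 1 < 2 * k), g ⟨2 * j.1 + 1, h⟩ = v j := by
    intro j h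
    simp only [hgdef]
    rw [if_neg (by omega)]
    congr 1
    apply Fin.ext; show (2 * j.1 + 1) / 2 = j.1; omega
  have hmem_ug : ∀ (j : Fin k) (a : Fin s), a ∈ u j ∨ a ∈ v j → Sum.inl a ∈ b j := by
    intro j a ha
    rw [huv j]
    rcases ha with ha | ha
    · exact List.mem_append_left _ (List.mem_map_of_mem ha)
    · exact List.mem_append_right _ (List.mem_cons_of_mem _ (List.mem_map_of_mem ha))
  have huv_nodup : ∀ j, (u j).Nodup ∧ (v j).Nodup ∧ List.Disjoint (u j) (v j) := by
    intro j
    have hn := (h2 _ (hbP j)).1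
    rw [huv j, List.nodup_append, List.nodup_cons] at hn
    obtain ⟨h₁, ⟨-, h₂⟩, h₃⟩ := hn
    refine ⟨(List.nodup_map_iff Sum.inl_injective).mp h₁,
      (List.nodup_map_iff Sum.inl_injective).mp h₂, ?_⟩
    intro a hau hav
    exact h₃ _ (List.mem_map_of_mem hau) _ (List.mem_cons_of_mem _ (List.mem_map_of_mem hav)) rfl
  have hg_disj : ∀ i₁ i₂ : Fin (2 * k), i₁ ≠ i₂ → List.Disjoint (g i₁) (g i₂) := by
    intro i₁ i₂ hne a ha₁ ha₂
    have hmm : ∀ i : Fin (2 * k), a ∈ g i → Sum.inl a ∈ b ⟨i.1 / 2, hhalf i⟩ := by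
      intro i ha
      apply hmem_ug
      simp only [hgdef] at ha
      by_cases hpar : i.1 % 2 = 0
      · rw [if_pos hpar] at ha; exact Or.inl ha
      · rw [if_neg hpar] at ha; exact Or.inr ha
    by_cases hjj : i₁.1 / 2 = i₂.1 / 2
    · have hpar : i₁.1 % 2 ≠ i₂.1 % 2 := fun hsame => hne (Fin.ext (by omega))
      obtain ⟨hun, hvn, hd⟩ := huv_nodup ⟨i₁.1 / 2, hhalf i₁⟩
      simp only [hgdef] at ha₁ ha₂
      have hcast : (⟨i₂.1 / 2, hhalf i₂⟩ : Fin k) = ⟨i₁.1 / 2, hhalf i₁⟩ :=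
        Fin.ext (show i₂.1 / 2 = i₁.1 / 2 by omega)
      by_cases p₁ : i₁.1 % 2 = 0
      · rw [if_pos p₁] at ha₁
        rw [if_neg (by omega : ¬ i₂.1 % 2 = 0)] at ha₂
        rw [hcast] at ha₂
        exact hd ha₁ ha₂
      · rw [if_neg p₁] at ha₁
        rw [if_pos (by omega : i₂.1 % 2 = 0)] at ha₂
        rw [hcast] at ha₂
        exact hd ha₂ ha₁
    · have hm₁ := hmm i₁ ha₁
      have hm₂ := hmm i₂ ha₂
      have heq := (h3 (Sum.inl a)).unique ⟨hbP _, hm₁⟩ ⟨hbP _, hm₂⟩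
      have hf := congrArg (List.filter (fun x : Fin s ⊕ Fin k => x.isRight)) heq
      rw [huv, huv, filter_isRight_block, filter_isRight_block] at hf
      have : (⟨i₁.1 / 2, hhalf i₁⟩ : Fin k) = ⟨i₂.1 / 2, hhalf i₂⟩ := by simpa using hf
      exact hjj (congrArg Fin.val this)
  -- build L
  have hlen : (List.ofFn g).length = 2 * k := by simp
  have hnd : (List.ofFn g).flatten.Nodup := by
    rw [List.nodup_flatten]
    constructor
    · intro l hl
      rw [List.mem_ofFn] at hl
      obtain ⟨i, rfl⟩ := hl
      simp only [hgdef]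
      by_cases hpar : i.1 % 2 = 0
      · rw [if_pos hpar]; exact (huv_nodup _).1
      · rw [if_neg hpar]; exact (huv_nodup _).2.1
    · rw [List.pairwise_iff_get]
      intro i j hij
      rw [List.get_ofFn, List.get_ofFn]
      apply hg_disj
      intro hcc
      exact absurd (congrArg Fin.val hcc) (Nat.ne_of_lt hij)
  have hcov : ∀ x : Fin s, x ∈ (List.ofFn g).flatten := by
    intro x
    obtain ⟨bb, ⟨hbbP, hbbx⟩, -⟩ := h3 (Sum.inl x)
    obtain ⟨j, rfl⟩ := hPmem bb hbbP
    rw [huv j, List.mem_append, List.mem_cons] at hbbx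
    have hx : x ∈ u j ∨ x ∈ v j := by
      rcases hbbx with h | h | h
      · obtain ⟨a', ha', he⟩ := List.mem_map.mp h
        exact Or.inl (Sum.inl_injective he ▸ ha')
      · exact absurd h (by simp)
      · obtain ⟨a', ha', he⟩ := List.mem_map.mp h
        exact Or.inr (Sum.inl_injective he ▸ ha')
    rw [List.mem_flatten]
    rcases hx with h | h
    · refine ⟨g ⟨2 * j.1, by have := j.2; omega⟩, ?_, ?_⟩
      · rw [List.mem_ofFn]; exact ⟨_, rfl⟩
      · rw [hg_even j]; exact h
    · refine ⟨g ⟨2 * j.1 + 1, by have := j.2; omega⟩, ?_, ?_⟩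
      · rw [List.mem_ofFn]; exact ⟨_, rfl⟩
      · rw [hg_odd j]; exact h
  set L : Bt s k := ⟨List.ofFn g, hlen, hnd, hcov⟩ with hLdef
  have hblk_eq : ∀ j, blk L j = b j := by
    intro j
    have e1 : L.1.get ⟨2 * j.1, by have := L.2.1; have := j.2; omega⟩ = u j := by
      show (List.ofFn g).get _ = u j
      rw [List.get_ofFn]
      exact hg_even j (by have := j.2; omega)
    have e2 : L.1.get ⟨2 * j.1 + 1, by have := L.2.1; have := j.2; omega⟩ = v j := by
      show (List.ofFn g).get _ = v j
      rw [List.get_ofFn]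
      exact hg_odd j (by have := j.2; omega)
    rw [blk, e1, e2, huv j]
  refine ⟨L, Finset.ext fun bb => ?_⟩
  simp only [encode, Finset.mem_image, Finset.mem_univ, true_and]
  constructor
  · rintro ⟨j, rfl⟩
    rw [hblk_eq j]; exact hbP j
  · intro hbb
    obtain ⟨j, rfl⟩ := hPmem bb hbb
    exact ⟨j, hblk_eq j⟩

end Main2
end Stmt1Aux

namespace Stmt1Aux
section Count
variable {s k : ℕ}

lemma mem_of_nodup_length {w : List (Fin s)} (h1 : w.Nodup) (h2 : w.length = s) (x : Fin s) :
    x ∈ w := by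
  classical
  have hc := List.toFinset_card_of_nodup h1
  rw [h2] at hc
  have he : w.toFinset = Finset.univ := Finset.eq_univ_of_card _ (by rw [hc, Fintype.card_fin])
  rw [← List.mem_toFinset, he]
  exact Finset.mem_univ x

def Lset (s : ℕ) := {w : List (Fin s) // w.Nodup ∧ w.length = s}
def Ct (s k : ℕ) := {cl : List ℕ // cl.length = 2 * k ∧ cl.sum = s}
def Cf (s k : ℕ) := {c : Fin (2 * k) → ℕ // ∑ i, c i = s}

lemma flatten_length (L : Bt s k) : L.1.flatten.length = s := by
  classical
  have hc := List.toFinset_card_of_nodup L.2.2.1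
  have he : L.1.flatten.toFinset = Finset.univ :=
    Finset.eq_univ_of_forall (fun x => List.mem_toFinset.mpr (L.2.2.2 x))
  rw [he, Finset.card_univ, Fintype.card_fin] at hc
  omega

def splitEquiv : Bt s k ≃ Lset s × Ct s k where
  toFun L := (⟨L.1.flatten, L.2.2.1, flatten_length L⟩,
    ⟨L.1.map List.length, by rw [List.length_map, L.2.1],
      by rw [← List.length_flatten, flatten_length L]⟩)
  invFun wc := by
    refine ⟨splitList wc.2.1 wc.1.1, ?_, ?_, ?_⟩
    · rw [length_splitList, wc.2.2.1]
    all_goals {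
      have he : (splitList wc.2.1 wc.1.1).flatten = wc.1.1 := by
        rw [flatten_splitList, wc.2.2.2]
        exact List.take_of_length_le (le_of_eq wc.1.2.2)
      rw [he]
      first
        | exact wc.1.2.1
        | exact fun x => mem_of_nodup_length wc.1.2.1 wc.1.2.2 x }
  left_inv L := Subtype.ext (splitList_flatten L.1)
  right_inv wc := by
    have he : (splitList wc.2.1 wc.1.1).flatten = wc.1.1 := by
      rw [flatten_splitList, wc.2.2.2]
      exact List.take_of_length_le (le_of_eq wc.1.2.2)
    have hm : (splitList wc.2.1 wc.1.1).map List.length = wc.2.1 :=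
      map_length_splitList _ _ (by rw [wc.2.2.2, wc.1.2.2])
    exact Prod.ext (Subtype.ext he) (Subtype.ext hm)

lemma ofFn_get_cast {α : Type*} {n : ℕ} (cl : List α) (h : cl.length = n) :
    List.ofFn (fun i : Fin n => cl.get (Fin.cast h.symm i)) = cl := by
  apply List.ext_get (by simp [h])
  intro m h1 h2
  rw [List.get_ofFn]
  rfl

def ctEquiv : Cf s k ≃ Ct s k where
  toFun c := ⟨List.ofFn c.1, by simp, by rw [List.sum_ofFn]; exact c.2⟩
  invFun cl := ⟨fun i => cl.1.get (Fin.cast cl.2.1.symm i), by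
    rw [← List.sum_ofFn, ofFn_get_cast cl.1 cl.2.1]; exact cl.2.2⟩
  left_inv c := Subtype.ext (funext fun i => by
    show (List.ofFn c.1).get _ = c.1 i
    rw [List.get_ofFn]; congr 1)
  right_inv cl := Subtype.ext (ofFn_get_cast cl.1 cl.2.1)

def symEquiv : Cf s k ≃ Sym (Fin (2 * k)) s where
  toFun c := ⟨∑ i, Multiset.replicate (c.1 i) i, by simp [c.2]⟩
  invFun m := ⟨fun i => m.1.count i, by
    have hz := Finset.sum_subset (Finset.subset_univ m.1.toFinset)
      (fun x _ hx => Multiset.count_eq_zero_of_notMem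
        (fun hmem => hx (Multiset.mem_toFinset.mpr hmem)))
    rw [← hz, Multiset.toFinset_sum_count_eq, m.2]⟩
  left_inv c := Subtype.ext (funext fun i => by
    show Multiset.count i (∑ j, Multiset.replicate (c.1 j) j) = c.1 i
    rw [Multiset.count_sum']
    simp [Multiset.count_replicate])
  right_inv m := Subtype.ext (by
    have h1 : ∀ i : Fin (2 * k), Multiset.replicate (m.1.count i) i
        = m.1.count i • ({i} : Multiset (Fin (2 * k))) := by
      intro i; rw [Multiset.nsmul_singleton]
    calc ∑ i : Fin (2 * k), Multiset.replicate (m.1.count i) i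
        = ∑ i : Fin (2 * k), m.1.count i • ({i} : Multiset (Fin (2 * k))) := by
          exact Finset.sum_congr rfl (fun i _ => h1 i)
      _ = ∑ i ∈ m.1.toFinset, m.1.count i • ({i} : Multiset (Fin (2 * k))) :=
          (Finset.sum_subset (Finset.subset_univ m.1.toFinset)
            (fun x _ hx => by
              rw [Multiset.count_eq_zero_of_notMem
                (fun hmem => hx (Multiset.mem_toFinset.mpr hmem))]
              simp)).symm
      _ = m.1 := Multiset.toFinset_sum_count_nsmul_eq m.1)

lemma card_Lset : Nat.card (Lset s) = s.factorial := by
  classical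
  have hperm : ∀ w : List (Fin s),
      w ∈ (List.finRange s).permutations ↔ (w.Nodup ∧ w.length = s) := by
    intro w
    rw [List.mem_permutations]
    constructor
    · intro h
      exact ⟨h.nodup_iff.mpr (List.nodup_finRange s), by rw [h.length_eq, List.length_finRange]⟩
    · rintro ⟨h1, h2⟩
      rw [List.perm_ext_iff_of_nodup h1 (List.nodup_finRange s)]
      intro a
      simp only [List.mem_finRange, iff_true]
      exact mem_of_nodup_length h1 h2 a
  set T : Finset (List (Fin s)) :=
    ⟨((List.finRange s).permutations : Multiset (List (Fin s))),
      by exact_mod_cast List.nodup_permutations _ (List.nodup_finRange s)⟩ with hT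
  have e : Lset s ≃ {w // w ∈ T} := Equiv.subtypeEquivRight (fun w => by
    rw [hT]
    simp only [Finset.mem_mk, Multiset.mem_coe]
    exact (hperm w).symm)
  rw [Nat.card_congr e, Nat.card_eq_fintype_card, Fintype.card_coe, hT]
  show Multiset.card _ = _
  rw [Multiset.coe_card, List.length_permutations, List.length_finRange]

lemma card_Ct : Nat.card (Ct s k) = (2 * k + s - 1).choose s := by
  rw [← Nat.card_congr (ctEquiv (s := s) (k := k)), Nat.card_congr (symEquiv (s := s) (k := k)),
    Nat.card_eq_fintype_card, Sym.card_sym_eq_choose, Fintype.card_fin]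

end Count
end Stmt1Aux

theorem stmt1 (s k : ℕ) (hk : 1 ≤ k) :
    Nat.card (InnerOrderedPartitionOneT s k) =
      s.factorial * (2 * k + s - 1).choose s := by
  have e : Stmt1Aux.Bt s k ≃ InnerOrderedPartitionOneT s k :=
    Equiv.ofBijective (fun L => ⟨Stmt1Aux.encode L, Stmt1Aux.encode_mem L⟩)
      ⟨fun L₁ L₂ h => Stmt1Aux.encode_injective (congrArg Subtype.val h),
        fun P => (Stmt1Aux.encode_surjective P.1 P.2).imp (fun L hL => Subtype.ext hL)⟩
  rw [← Nat.card_congr e, Nat.card_congr (Stmt1Aux.splitEquiv (s := s) (k := k)),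
    Nat.card_prod, Stmt1Aux.card_Lset, Stmt1Aux.card_Ct]
end

section
/- Let LO_0(n) denote the number of saturated 2-regular simple stacks on [n] with the maximum possible number of arcs, namely floor((n-1)/2) arcs. Then LO_0(0) = 1, LO_0(n) = 1 for odd n ≥ 1, and LO_0(n) = n(n+2)/8 for even n ≥ 1. -/
/-- A 2-regular simple stack on `[n]`: a set of arcs `(i,j)` with `1 ≤ i`, `j ≤ n`,
`j - i ≥ 2` (2-regular), every vertex of degree at most 1 (simple), and no two
arcs crossing (stack). -/
def IsStack (n : ℕ) (A : Finset (ℕ × ℕ)) : Prop :=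
  (∀ p ∈ A, 1 ≤ p.1 ∧ p.2 ≤ n ∧ p.1 + 2 ≤ p.2) ∧
  (∀ p ∈ A, ∀ q ∈ A, p ≠ q → p.1 ≠ q.1 ∧ p.1 ≠ q.2 ∧ p.2 ≠ q.1 ∧ p.2 ≠ q.2) ∧
  (∀ p ∈ A, ∀ q ∈ A, ¬(p.1 < q.1 ∧ q.1 < p.2 ∧ p.2 < q.2))

/-- A stack is saturated if no arc can be added while keeping all constraints. -/
def IsSaturatedStack (n : ℕ) (A : Finset (ℕ × ℕ)) : Prop :=
  IsStack n A ∧ ∀ p : ℕ × ℕ, p ∉ A → ¬ IsStack n (insert p A)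

/-- The number of saturated 2-regular simple stacks on `[n]` with the maximum possible
number `⌊(n-1)/2⌋` of arcs (optimal structures, which are automatically saturated). -/
noncomputable def LO0 (n : ℕ) : ℕ :=
  Nat.card {A : Finset (ℕ × ℕ) // IsSaturatedStack n A ∧ A.card = (n - 1) / 2}

/-- "fan" (rainbow) of h nested arcs centered at c. -/
def fan (c h : ℕ) : Finset (ℕ × ℕ) := (Finset.Icc 1 h).image fun d => (c - d, c + d)

/-- t outermost nested arcs (i, n+1-i). -/
def outerA (n t : ℕ) : Finset (ℕ × ℕ) := (Finset.Icc 1 t).image fun i => (i, n + 1 - i)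

lemma mem_fan {c h : ℕ} (hc : h ≤ c) {p : ℕ × ℕ} :
    p ∈ fan c h ↔ ∃ d, 1 ≤ d ∧ d ≤ h ∧ p.1 + d = c ∧ p.2 = c + d := by
  constructor
  · intro hp
    obtain ⟨d, hd, rfl⟩ := Finset.mem_image.mp hp
    simp only [Finset.mem_Icc] at hd
    exact ⟨d, hd.1, hd.2, by omega, rfl⟩
  · rintro ⟨d, h1, h2, h3, h4⟩
    refine Finset.mem_image.mpr ⟨d, Finset.mem_Icc.mpr ⟨h1, h2⟩, ?_⟩
    have : p = (p.1, p.2) := rfl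
    rw [this]; congr 1 <;> omega

lemma mem_outerA {n t : ℕ} (ht : t ≤ n) {p : ℕ × ℕ} :
    p ∈ outerA n t ↔ 1 ≤ p.1 ∧ p.1 ≤ t ∧ p.2 + p.1 = n + 1 := by
  constructor
  · intro hp
    obtain ⟨i, hi, rfl⟩ := Finset.mem_image.mp hp
    simp only [Finset.mem_Icc] at hi
    exact ⟨hi.1, hi.2, by omega⟩
  · rintro ⟨h1, h2, h3⟩
    refine Finset.mem_image.mpr ⟨p.1, Finset.mem_Icc.mpr ⟨h1, h2⟩, ?_⟩
    have : p = (p.1, p.2) := rfl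
    rw [this]; congr 1; omega

lemma card_fan (c h : ℕ) : (fan c h).card = h := by
  rw [fan, Finset.card_image_of_injective _ (fun a b hab => by
    simpa using congrArg Prod.snd hab), Nat.card_Icc]
  omega

lemma card_outerA (n t : ℕ) : (outerA n t).card = t := by
  rw [outerA, Finset.card_image_of_injective _ (fun a b hab => by
    simpa using congrArg Prod.fst hab), Nat.card_Icc]
  omega

lemma fan_zero (c : ℕ) : fan c 0 = ∅ := by simp [fan]

lemma outerA_zero (n : ℕ) : outerA n 0 = ∅ := by simp [outerA]

lemma fan_succ (c h : ℕ) : fan c (h + 1) = insert (c - (h+1), c + (h+1)) (fan c h) := by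
  rw [fan, fan, show Finset.Icc 1 (h+1) = insert (h+1) (Finset.Icc 1 h) by
    ext x; simp [Finset.mem_Icc]; omega, Finset.image_insert]

lemma fan_shift {c h : ℕ} (hc : h ≤ c) (s : ℕ) :
    (fan c h).image (fun p => (p.1 + s, p.2 + s)) = fan (c + s) h := by
  ext p
  rw [mem_fan (by omega)]
  constructor
  · rintro hp
    obtain ⟨q, hq, rfl⟩ := Finset.mem_image.mp hp
    obtain ⟨d, h1, h2, h3, h4⟩ := (mem_fan hc).mp hq
    exact ⟨d, h1, h2, by simp only [Prod.fst]; omega, by simp only [Prod.snd]; omega⟩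
  · rintro ⟨d, h1, h2, h3, h4⟩
    refine Finset.mem_image.mpr ⟨(c - d, c + d), (mem_fan hc).mpr ⟨d, h1, h2, by omega, rfl⟩, ?_⟩
    have hp : p = (p.1, p.2) := rfl
    rw [hp]; simp only [Prod.mk.injEq]
    constructor <;> omega

/-- The optimal even structure: outer arcs, plus two fans centered at the
unmatched vertices u, v. Here n = 2k. -/
def Estack (k u v : ℕ) : Finset (ℕ × ℕ) :=
  outerA (2 * k) (k + u - v) ∪ (fan u (v - (k + 1)) ∪ fan v (k - u))

def EDom (k u v : ℕ) : Prop := 1 ≤ u ∧ u ≤ k ∧ k < v ∧ v ≤ u + k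

/-- In a nonempty stack-like arc family, the vertex right after the left endpoint of a
minimal-span arc is unmatched. -/
lemma exists_unmatched (n : ℕ) (A : Finset (ℕ × ℕ)) (hA : IsStack n A) (hne : A.Nonempty) :
    ∃ v, 2 ≤ v ∧ v + 1 ≤ n ∧ ∀ q ∈ A, q.1 ≠ v ∧ q.2 ≠ v := by
  obtain ⟨hrange, hsimple, hcross⟩ := hA
  obtain ⟨p, hp, hmin⟩ := A.exists_min_image (fun p => p.2 - p.1) hne
  refine ⟨p.1 + 1, by have := hrange p hp; omega, by have := hrange p hp; omega, ?_⟩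
  intro q hq
  have hpr := hrange p hp
  have hqr := hrange q hq
  have hm := hmin q hq
  constructor
  · intro hq1
    have hpq : p ≠ q := by intro h; subst h; omega
    have hs := hsimple p hp q hq hpq
    have hc1 := hcross p hp q hq
    omega
  · intro hq2
    have hpq : p ≠ q := by intro h; subst h; omega
    have hs := hsimple p hp q hq hpq
    have hc1 := hcross q hq p hp
    omega

/-- Fundamental bound: a stack on [n], n ≥ 1, has at most (n-1)/2 arcs. -/
lemma stack_card_bound {n : ℕ} {A : Finset (ℕ × ℕ)} (hA : IsStack n A) (hn : 1 ≤ n) :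
    2 * A.card + 1 ≤ n := by
  rcases A.eq_empty_or_nonempty with rfl | hne
  · simpa using hn
  obtain ⟨v, hv1, hv2, hv⟩ := exists_unmatched n A hA hne
  obtain ⟨hrange, hsimple, -⟩ := hA
  have hcard : (A.biUnion fun q => {q.1, q.2}).card = 2 * A.card := by
    rw [Finset.card_biUnion]
    · rw [Finset.sum_congr rfl (fun q hq => by
        rw [Finset.card_insert_of_notMem (by simp; have := hrange q hq; omega),
          Finset.card_singleton])]
      simp [Finset.sum_const, mul_comm]
    · intro q hq q' hq' hne'
      have hs := hsimple q hq q' hq' hne'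
      simp only [Finset.disjoint_left, Finset.mem_insert, Finset.mem_singleton]
      rintro a (rfl | rfl) <;> rintro (h | h) <;> omega
  have hsub : (A.biUnion fun q => {q.1, q.2}) ⊆ (Finset.Icc 1 n).erase v := by
    intro a ha
    obtain ⟨q, hq, hmem⟩ := Finset.mem_biUnion.mp ha
    simp only [Finset.mem_insert, Finset.mem_singleton] at hmem
    have := hrange q hq
    have := hv q hq
    rcases hmem with rfl | rfl <;>
      · rw [Finset.mem_erase, Finset.mem_Icc]; omega
  have := Finset.card_le_card hsub
  rw [hcard, Finset.card_erase_of_mem (by rw [Finset.mem_Icc]; omega), Nat.card_Icc] at this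
  omega

/-- Optimality predicate. -/
def Opt (n : ℕ) (A : Finset (ℕ × ℕ)) : Prop := IsStack n A ∧ A.card = (n - 1) / 2

lemma stack_zero {A : Finset (ℕ × ℕ)} (hA : IsStack 0 A) : A = ∅ := by
  rcases A.eq_empty_or_nonempty with rfl | ⟨p, hp⟩
  · rfl
  · have := hA.1 p hp; omega

lemma sat_iff_opt {n : ℕ} {A : Finset (ℕ × ℕ)} :
    (IsSaturatedStack n A ∧ A.card = (n - 1) / 2) ↔ Opt n A := by
  constructor
  · rintro ⟨⟨h1, -⟩, h2⟩; exact ⟨h1, h2⟩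
  · rintro ⟨h1, h2⟩
    refine ⟨⟨h1, ?_⟩, h2⟩
    intro p hp hins
    rcases Nat.eq_zero_or_pos n with rfl | hn
    · have := stack_zero hins
      have : p ∈ (∅ : Finset (ℕ × ℕ)) := this ▸ Finset.mem_insert_self p A
      simp at this
    · have hb := stack_card_bound hins hn
      rw [Finset.card_insert_of_notMem hp, h2] at hb
      omega

/-- Shifting a stack supported on the block [c+1, c+m] down by c. -/
lemma stack_shift {n c m : ℕ} {A : Finset (ℕ × ℕ)} (hA : IsStack n A)
    (hblock : ∀ p ∈ A, c + 1 ≤ p.1 ∧ p.2 ≤ c + m) :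
    IsStack m (A.image fun p => (p.1 - c, p.2 - c)) ∧
    (A.image fun p => (p.1 - c, p.2 - c)).card = A.card ∧
    (A.image fun p => (p.1 - c, p.2 - c)).image (fun p => (p.1 + c, p.2 + c)) = A := by
  obtain ⟨hrange, hsimple, hcross⟩ := hA
  have hinj : ∀ p ∈ A, ∀ q ∈ A,
      (p.1 - c, p.2 - c) = (q.1 - c, q.2 - c) → p = q := by
    intro p hp q hq h
    rw [Prod.mk.injEq] at h
    have h1 := hblock p hp; have h2 := hblock q hq
    have := hrange p hp; have := hrange q hq
    rcases eq_or_ne p q with h' | h'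
    · exact h'
    · have := hsimple p hp q hq h'; exact Prod.ext (by omega) (by omega)
  refine ⟨⟨?_, ?_, ?_⟩, Finset.card_image_of_injOn hinj, ?_⟩
  · intro p' hp'
    obtain ⟨p, hp, rfl⟩ := Finset.mem_image.mp hp'
    have := hrange p hp; have := hblock p hp
    refine ⟨by simp only; omega, by simp only; omega, by simp only; omega⟩
  · intro p' hp' q' hq' hne
    obtain ⟨p, hp, rfl⟩ := Finset.mem_image.mp hp'
    obtain ⟨q, hq, rfl⟩ := Finset.mem_image.mp hq'
    have hpq : p ≠ q := by rintro rfl; exact hne rfl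
    have hs := hsimple p hp q hq hpq
    have := hblock p hp; have := hblock q hq
    have := hrange p hp; have := hrange q hq
    refine ⟨by simp only; omega, by simp only; omega, by simp only; omega, by simp only; omega⟩
  · intro p' hp' q' hq'
    obtain ⟨p, hp, rfl⟩ := Finset.mem_image.mp hp'
    obtain ⟨q, hq, rfl⟩ := Finset.mem_image.mp hq'
    have hc := hcross p hp q hq
    have := hblock p hp; have := hblock q hq
    have := hrange p hp; have := hrange q hq
    simp only; omega
  · rw [Finset.image_image]
    have : ∀ p ∈ A, ((fun p => (p.1 + c, p.2 + c)) ∘ fun p => (p.1 - c, p.2 - c)) p = id p := by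
      intro p hp
      have := hblock p hp; have := hrange p hp
      simp only [Function.comp_apply, id_eq]
      exact Prod.ext (by simp only; omega) (by simp only; omega)
    rw [Finset.image_congr this, Finset.image_id]

lemma opt_fan (k : ℕ) : Opt (2 * k + 1) (fan (k + 1) k) := by
  have hm : ∀ {p : ℕ × ℕ}, p ∈ fan (k+1) k ↔
      ∃ d, 1 ≤ d ∧ d ≤ k ∧ p.1 + d = k + 1 ∧ p.2 = k + 1 + d := fun {p} => mem_fan (by omega)
  refine ⟨⟨?_, ?_, ?_⟩, by rw [card_fan]; omega⟩
  · intro p hp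
    obtain ⟨d, h1, h2, h3, h4⟩ := hm.mp hp
    omega
  · intro p hp q hq hpq
    obtain ⟨d, h1, h2, h3, h4⟩ := hm.mp hp
    obtain ⟨e, g1, g2, g3, g4⟩ := hm.mp hq
    have hde : d ≠ e := fun h => hpq (Prod.ext (by omega) (by omega))
    refine ⟨by omega, by omega, by omega, by omega⟩
  · intro p hp q hq
    obtain ⟨d, h1, h2, h3, h4⟩ := hm.mp hp
    obtain ⟨e, g1, g2, g3, g4⟩ := hm.mp hq
    omega

lemma mem_Estack {k u v : ℕ} (h : EDom k u v) {p : ℕ × ℕ} :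
    p ∈ Estack k u v ↔
      (1 ≤ p.1 ∧ p.1 ≤ k + u - v ∧ p.2 + p.1 = 2 * k + 1) ∨
      (∃ d, 1 ≤ d ∧ d ≤ v - (k + 1) ∧ p.1 + d = u ∧ p.2 = u + d) ∨
      (∃ d, 1 ≤ d ∧ d ≤ k - u ∧ p.1 + d = v ∧ p.2 = v + d) := by
  obtain ⟨h1, h2, h3, h4⟩ := id h
  rw [Estack, Finset.mem_union, Finset.mem_union, mem_outerA (by omega),
    mem_fan (show v - (k+1) ≤ u by omega), mem_fan (show k - u ≤ v by omega)]

lemma opt_Estack {k u v : ℕ} (h : EDom k u v) : Opt (2 * k) (Estack k u v) := by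
  have hD := h
  obtain ⟨h1, h2, h3, h4⟩ := hD
  refine ⟨⟨?_, ?_, ?_⟩, ?_⟩
  · intro p hp
    rcases (mem_Estack h).mp hp with h' | ⟨d, hd⟩ | ⟨d, hd⟩ <;> omega
  · intro p hp q hq hpq
    rw [Ne, Prod.ext_iff, not_and_or] at hpq
    rcases (mem_Estack h).mp hp with h' | ⟨d, hd⟩ | ⟨d, hd⟩ <;>
      rcases (mem_Estack h).mp hq with g' | ⟨e, he⟩ | ⟨e, he⟩ <;>
      refine ⟨by omega, by omega, by omega, by omega⟩
  · intro p hp q hq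
    rcases (mem_Estack h).mp hp with h' | ⟨d, hd⟩ | ⟨d, hd⟩ <;>
      rcases (mem_Estack h).mp hq with g' | ⟨e, he⟩ | ⟨e, he⟩ <;> omega
  · have hd1 : Disjoint (fan u (v - (k+1))) (fan v (k - u)) := by
      rw [Finset.disjoint_left]
      intro p hp hq
      obtain ⟨d, hd⟩ := (mem_fan (show v - (k+1) ≤ u by omega)).mp hp
      obtain ⟨e, he⟩ := (mem_fan (show k - u ≤ v by omega)).mp hq
      omega
    have hd2 : Disjoint (outerA (2*k) (k + u - v)) (fan u (v - (k+1)) ∪ fan v (k - u)) := by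
      rw [Finset.disjoint_left]
      intro p hp hq
      have hp' := (mem_outerA (show k + u - v ≤ 2*k by omega)).mp hp
      rcases Finset.mem_union.mp hq with hq' | hq'
      · obtain ⟨d, hd⟩ := (mem_fan (show v - (k+1) ≤ u by omega)).mp hq'; omega
      · obtain ⟨e, he⟩ := (mem_fan (show k - u ≤ v by omega)).mp hq'; omega
    rw [Estack, Finset.card_union_of_disjoint hd2, Finset.card_union_of_disjoint hd1,
      card_outerA, card_fan, card_fan]
    omega

lemma stack_subset {n : ℕ} {A B : Finset (ℕ × ℕ)} (hA : IsStack n A) (hBA : B ⊆ A) :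
    IsStack n B :=
  ⟨fun p hp => hA.1 p (hBA hp), fun p hp q hq => hA.2.1 p (hBA hp) q (hBA hq),
   fun p hp q hq => hA.2.2 p (hBA hp) q (hBA hq)⟩

lemma dichotomy {n m : ℕ} {A : Finset (ℕ × ℕ)} (hA : IsStack n A) (hm : (1, m) ∈ A) :
    ∀ p ∈ A, p.2 ≤ m ∨ m + 1 ≤ p.1 := by
  intro p hp
  rcases eq_or_ne p (1, m) with rfl | hne
  · simp
  · have hs := hA.2.1 p hp (1, m) hm hne
    have hc := hA.2.2 (1, m) hm p hp
    have hr := hA.1 p hp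
    simp only at hs hc
    omega

lemma Estack_eq₁ {k : ℕ} : Estack k 1 (k + 1) = fan (k + 1) (k - 1) := by
  rw [Estack, show k + 1 - (k + 1) = 0 by omega, outerA_zero, fan_zero,
    Finset.empty_union, Finset.empty_union, show k - 1 = k - 1 from rfl]

lemma Estack_two_fans {k ci ce : ℕ} (hk : k = ci + ce + 1) :
    Estack k (ci + 1) (2 * ci + ce + 2) = fan (ci + 1) ci ∪ fan (2 * ci + ce + 2) ce := by
  have e1 : k + (ci + 1) - (2 * ci + ce + 2) = 0 := by omega
  have e2 : 2 * ci + ce + 2 - (k + 1) = ci := by omega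
  have e3 : k - (ci + 1) = ce := by omega
  rw [Estack, e1, e2, e3, outerA_zero, Finset.empty_union]

lemma Estack_insert_shift {k u v : ℕ} (h : EDom k u v) :
    insert (1, 2 * (k + 1)) ((Estack k u v).image (fun p => (p.1 + 1, p.2 + 1)))
      = Estack (k + 1) (u + 1) (v + 1) := by
  have h' : EDom (k + 1) (u + 1) (v + 1) := by obtain ⟨a, b, c, d⟩ := h; exact ⟨by omega, by omega, by omega, by omega⟩
  obtain ⟨h1, h2, h3, h4⟩ := id h
  ext p
  rw [mem_Estack h', Finset.mem_insert, Finset.mem_image]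
  constructor
  · rintro (rfl | ⟨q, hq, rfl⟩)
    · exact Or.inl ⟨by omega, by omega, by omega⟩
    · rcases (mem_Estack h).mp hq with g | ⟨d, hd⟩ | ⟨d, hd⟩
      · exact Or.inl ⟨by simp only; omega, by simp only; omega, by simp only; omega⟩
      · exact Or.inr (Or.inl ⟨d, by omega, by omega, by simp only; omega, by simp only; omega⟩)
      · exact Or.inr (Or.inr ⟨d, by omega, by omega, by simp only; omega, by simp only; omega⟩)
  · rintro (g | ⟨d, hd⟩ | ⟨d, hd⟩)
    · rcases eq_or_ne p.1 1 with hp1 | hp1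
      · left; have : p = (p.1, p.2) := rfl
        rw [this]; rw [Prod.mk.injEq]; constructor <;> omega
      · right
        refine ⟨(p.1 - 1, p.2 - 1), (mem_Estack h).mpr (Or.inl ⟨by simp only; omega,
          by simp only; omega, by simp only; omega⟩), ?_⟩
        have : p = (p.1, p.2) := rfl
        rw [this]; rw [Prod.mk.injEq]; simp only; constructor <;> omega
    · right
      refine ⟨(p.1 - 1, p.2 - 1), (mem_Estack h).mpr (Or.inr (Or.inl ⟨d, by omega, by omega,
        by simp only; omega, by simp only; omega⟩)), ?_⟩
      have : p = (p.1, p.2) := rfl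
      rw [this]; rw [Prod.mk.injEq]; simp only; constructor <;> omega
    · right
      refine ⟨(p.1 - 1, p.2 - 1), (mem_Estack h).mpr (Or.inr (Or.inr ⟨d, by omega, by omega,
        by simp only; omega, by simp only; omega⟩)), ?_⟩
      have : p = (p.1, p.2) := rfl
      rw [this]; rw [Prod.mk.injEq]; simp only; constructor <;> omega

lemma split_all {n m : ℕ} {A : Finset (ℕ × ℕ)} (hA : IsStack n A) (hm : (1, m) ∈ A)
    (hmn : m < n) :
    ∃ Ai Be : Finset (ℕ × ℕ), IsStack m Ai ∧ (1, m) ∈ Ai ∧ IsStack (n - m) Be ∧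
      Ai.card + Be.card = A.card ∧ A = Ai ∪ Be.image (fun p => (p.1 + m, p.2 + m)) := by
  classical
  set Ai := A.filter (fun p => p.2 ≤ m) with hAi
  set Ae := A.filter (fun p => ¬ p.2 ≤ m) with hAe
  have hdich := dichotomy hA hm
  have hAes : IsStack n Ae := stack_subset hA (Finset.filter_subset _ _)
  have hblock : ∀ p ∈ Ae, m + 1 ≤ p.1 ∧ p.2 ≤ m + (n - m) := by
    intro p hp
    rw [hAe, Finset.mem_filter] at hp
    have := hdich p hp.1
    have := hA.1 p hp.1
    omega
  obtain ⟨hBe, hBecard, hBeround⟩ := stack_shift (c := m) (m := n - m) hAes hblock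
  refine ⟨Ai, _, ⟨?_, ?_, ?_⟩, ?_, hBe, ?_, ?_⟩
  · intro p hp
    rw [hAi, Finset.mem_filter] at hp
    have := hA.1 p hp.1
    exact ⟨by omega, hp.2, by omega⟩
  · exact fun p hp q hq => hA.2.1 p (Finset.filter_subset _ _ hp) q (Finset.filter_subset _ _ hq)
  · exact fun p hp q hq => hA.2.2 p (Finset.filter_subset _ _ hp) q (Finset.filter_subset _ _ hq)
  · rw [hAi, Finset.mem_filter]; exact ⟨hm, le_refl m⟩
  · rw [hBecard, hAi, hAe]
    exact Finset.card_filter_add_card_filter_not _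
  · rw [hBeround, hAi, hAe]
    exact (Finset.filter_union_filter_not_eq _ A).symm

theorem classify (n : ℕ) :
    (∀ k A, n = 2 * k + 1 → Opt n A → A = fan (k + 1) k) ∧
    (∀ k A, n = 2 * k → 1 ≤ k → Opt n A → ∃ u v, EDom k u v ∧ A = Estack k u v) := by
  induction n using Nat.strong_induction_on with
  | _ n IH =>
  constructor
  · rintro k A rfl ⟨hA, hcard⟩
    have hcard' : A.card = k := by omega
    rcases Nat.eq_zero_or_pos k with rfl | hk
    · rw [Finset.card_eq_zero] at hcard'
      rw [hcard', fan_zero]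
    by_cases h1 : ∃ p ∈ A, p.1 = 1
    · obtain ⟨p, hp, hp1⟩ := h1
      have hpm : p = (1, p.2) := by rw [← hp1]
      rw [hpm] at hp
      have hr := hA.1 _ hp
      simp only at hr
      rcases lt_or_eq_of_le hr.2.1 with hmn | hmn
      · exfalso
        obtain ⟨Ai, Be, hAi, hAim, hBe, hsum, -⟩ := split_all hA hp hmn
        have b1 := stack_card_bound hAi (by omega)
        have b2 := stack_card_bound hBe (by omega)
        omega
      · -- p.2 = 2k+1 : the outermost arc is present
        rw [hmn] at hp
        set A' := A.erase (1, 2 * k + 1) with hA'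
        have hA's : IsStack (2 * k + 1) A' := stack_subset hA (Finset.erase_subset _ _)
        have hblock : ∀ q ∈ A', 1 + 1 ≤ q.1 ∧ q.2 ≤ 1 + (2 * k - 1) := by
          intro q hq
          rw [hA', Finset.mem_erase] at hq
          have hs := hA.2.1 q hq.2 (1, 2 * k + 1) hp hq.1
          have := hA.1 q hq.2
          simp only at hs
          omega
        obtain ⟨hB, hBcard, hBround⟩ := stack_shift (c := 1) (m := 2 * k - 1) hA's hblock
        have hA'card : A'.card = k - 1 := by
          rw [hA', Finset.card_erase_of_mem hp, hcard']
        have hBfan : (A'.image fun p => (p.1 - 1, p.2 - 1)) = fan (k - 1 + 1) (k - 1) := by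
          exact (IH (2 * k - 1) (by omega)).1 (k - 1) _ (by omega)
            ⟨hB, by rw [hBcard, hA'card]; omega⟩
        rw [hBfan] at hBround
        rw [show k - 1 + 1 = k by omega] at hBround
        rw [fan_shift (by omega) 1] at hBround
        have hins : A = insert (1, 2 * k + 1) A' := (Finset.insert_erase hp).symm
        have hfs := fan_succ (k + 1) (k - 1)
        rw [show k - 1 + 1 = k by omega, show k + 1 - k = 1 by omega, show k + 1 + k = 2 * k + 1 by omega] at hfs
        rw [hins, ← hBround, hfs]
    · exfalso
      push_neg at h1
      have hblock : ∀ p ∈ A, 1 + 1 ≤ p.1 ∧ p.2 ≤ 1 + (2 * k) := by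
        intro p hp
        have := hA.1 p hp
        have := h1 p hp
        omega
      obtain ⟨hB, hBcard, -⟩ := stack_shift (c := 1) (m := 2 * k) hA hblock
      have := stack_card_bound hB (by omega)
      omega
  · rintro k A rfl hk ⟨hA, hcard⟩
    have hcard' : A.card = k - 1 := by omega
    by_cases h1 : ∃ p ∈ A, p.1 = 1
    · obtain ⟨p, hp, hp1⟩ := h1
      have hpm : p = (1, p.2) := by rw [← hp1]
      rw [hpm] at hp
      have hr := hA.1 _ hp
      simp only at hr
      rcases lt_or_eq_of_le hr.2.1 with hmn | hmn
      · -- split into two odd blocks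
        obtain ⟨Ai, Be, hAi, hAim, hBe, hsum, hun⟩ := split_all hA hp hmn
        have b1 := stack_card_bound hAi (by omega)
        have b2 := stack_card_bound hBe (by omega)
        have hAir := hAi.1 _ hAim
        simp only at hAir
        set ci := Ai.card with hci
        set ce := Be.card with hce
        have hm1 : p.2 = 2 * ci + 1 := by omega
        have hm2 : 2 * k - p.2 = 2 * ce + 1 := by omega
        have hAifan : Ai = fan (ci + 1) ci :=
          (IH p.2 (by omega)).1 ci Ai (by omega) ⟨hAi, by omega⟩
        have hBefan : Be = fan (ce + 1) ce :=
          (IH (2 * k - p.2) (by omega)).1 ce Be (by omega) ⟨hBe, by omega⟩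
        refine ⟨ci + 1, 2 * ci + ce + 2, ⟨by omega, by omega, by omega, by omega⟩, ?_⟩
        rw [Estack_two_fans (show k = ci + ce + 1 by omega), hun, hAifan, hBefan,
          fan_shift (by omega) p.2, show ce + 1 + p.2 = 2 * ci + ce + 2 by omega]
      · -- p.2 = 2k : outermost arc present, recurse on even
        rw [hmn] at hp
        have hk2 : 2 ≤ k := by omega
        set A' := A.erase (1, 2 * k) with hA'
        have hA's : IsStack (2 * k) A' := stack_subset hA (Finset.erase_subset _ _)
        have hblock : ∀ q ∈ A', 1 + 1 ≤ q.1 ∧ q.2 ≤ 1 + (2 * k - 2) := by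
          intro q hq
          rw [hA', Finset.mem_erase] at hq
          have hs := hA.2.1 q hq.2 (1, 2 * k) hp hq.1
          have := hA.1 q hq.2
          simp only at hs
          omega
        obtain ⟨hB, hBcard, hBround⟩ := stack_shift (c := 1) (m := 2 * k - 2) hA's hblock
        have hA'card : A'.card = k - 2 := by
          rw [hA', Finset.card_erase_of_mem hp, hcard']
          omega
        obtain ⟨u', v', hD', hBE⟩ := (IH (2 * k - 2) (by omega)).2 (k - 1) _ (by omega)
          (by omega) ⟨hB, by rw [hBcard, hA'card]; omega⟩
        rw [hBE] at hBround
        have hins : A = insert (1, 2 * k) A' := (Finset.insert_erase hp).symm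
        have hES := Estack_insert_shift hD'
        rw [show 2 * (k - 1 + 1) = 2 * k by omega, show k - 1 + 1 = k by omega] at hES
        refine ⟨u' + 1, v' + 1, ?_, ?_⟩
        · obtain ⟨a, b, c, d⟩ := hD'; exact ⟨by omega, by omega, by omega, by omega⟩
        · rw [hins, ← hBround, hES]
    · -- vertex 1 unmatched : shift to odd
      push_neg at h1
      have hblock : ∀ p ∈ A, 1 + 1 ≤ p.1 ∧ p.2 ≤ 1 + (2 * k - 1) := by
        intro p hp
        have := hA.1 p hp
        have := h1 p hp
        omega
      obtain ⟨hB, hBcard, hBround⟩ := stack_shift (c := 1) (m := 2 * k - 1) hA hblock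
      have hBfan : (A.image fun p => (p.1 - 1, p.2 - 1)) = fan (k - 1 + 1) (k - 1) :=
        (IH (2 * k - 1) (by omega)).1 (k - 1) _ (by omega) ⟨hB, by rw [hBcard, hcard']; omega⟩
      rw [hBfan, show k - 1 + 1 = k by omega, fan_shift (by omega) 1] at hBround
      exact ⟨1, k + 1, ⟨le_refl 1, hk, by omega, by omega⟩, by rw [← hBround, Estack_eq₁]⟩

lemma Estack_unmatched {k u v : ℕ} (h : EDom k u v) :
    ∀ q ∈ Estack k u v, q.1 ≠ u ∧ q.2 ≠ u ∧ q.1 ≠ v ∧ q.2 ≠ v := by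
  obtain ⟨h1, h2, h3, h4⟩ := id h
  intro q hq
  rcases (mem_Estack h).mp hq with g | ⟨d, hd⟩ | ⟨d, hd⟩ <;>
    refine ⟨by omega, by omega, by omega, by omega⟩

lemma Estack_covers {k u v : ℕ} (h : EDom k u v) :
    ∀ w, 1 ≤ w → w ≤ 2 * k → w ≠ u → w ≠ v → ∃ q ∈ Estack k u v, q.1 = w ∨ q.2 = w := by
  obtain ⟨h1, h2, h3, h4⟩ := id h
  intro w hw1 hw2 hwu hwv
  by_cases c1 : w ≤ k + u - v
  · exact ⟨(w, 2 * k + 1 - w), (mem_Estack h).mpr (Or.inl ⟨by simp only; omega,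
      by simp only; omega, by simp only; omega⟩), Or.inl rfl⟩
  by_cases c2 : w < u
  · exact ⟨(w, 2 * u - w), (mem_Estack h).mpr (Or.inr (Or.inl ⟨u - w, by omega, by omega,
      by simp only; omega, by simp only; omega⟩)), Or.inl rfl⟩
  by_cases c3 : w ≤ u + (v - (k + 1))
  · exact ⟨(2 * u - w, w), (mem_Estack h).mpr (Or.inr (Or.inl ⟨w - u, by omega, by omega,
      by simp only; omega, by simp only; omega⟩)), Or.inr rfl⟩
  by_cases c4 : w < v
  · exact ⟨(w, 2 * v - w), (mem_Estack h).mpr (Or.inr (Or.inr ⟨v - w, by omega, by omega,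
      by simp only; omega, by simp only; omega⟩)), Or.inl rfl⟩
  by_cases c5 : w ≤ v + (k - u)
  · exact ⟨(2 * v - w, w), (mem_Estack h).mpr (Or.inr (Or.inr ⟨w - v, by omega, by omega,
      by simp only; omega, by simp only; omega⟩)), Or.inr rfl⟩
  · exact ⟨(2 * k + 1 - w, w), (mem_Estack h).mpr (Or.inl ⟨by simp only; omega,
      by simp only; omega, by simp only; omega⟩), Or.inr rfl⟩

lemma Estack_inj {k u v u' v' : ℕ} (h : EDom k u v) (h' : EDom k u' v')
    (he : Estack k u v = Estack k u' v') : u = u' ∧ v = v' := by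
  obtain ⟨h1, h2, h3, h4⟩ := id h
  obtain ⟨g1, g2, g3, g4⟩ := id h'
  constructor
  · rcases eq_or_ne u u' with hh | hh
    · exact hh
    · exfalso
      obtain ⟨q, hq, hqe⟩ := Estack_covers h' u (by omega) (by omega) hh (by omega)
      rw [← he] at hq
      have := Estack_unmatched h q hq
      omega
  · rcases eq_or_ne v v' with hh | hh
    · exact hh
    · exfalso
      obtain ⟨q, hq, hqe⟩ := Estack_covers h' v (by omega) (by omega) (by omega) hh
      rw [← he] at hq
      have := Estack_unmatched h q hq
      omega

def EDomF (k : ℕ) : Finset (ℕ × ℕ) :=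
  (Finset.Icc 1 k).biUnion fun u => (Finset.Icc (k + 1) (k + u)).image fun v => (u, v)

lemma mem_EDomF {k : ℕ} {q : ℕ × ℕ} : q ∈ EDomF k ↔ EDom k q.1 q.2 := by
  rw [EDomF, Finset.mem_biUnion]
  constructor
  · rintro ⟨u, hu, hq⟩
    obtain ⟨v, hv, rfl⟩ := Finset.mem_image.mp hq
    rw [Finset.mem_Icc] at hu hv
    exact ⟨hu.1, hu.2, by simp only; omega, by simp only; omega⟩
  · rintro ⟨a, b, c, d⟩
    refine ⟨q.1, Finset.mem_Icc.mpr ⟨a, b⟩, Finset.mem_image.mpr ⟨q.2,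
      Finset.mem_Icc.mpr ⟨by omega, by omega⟩, rfl⟩⟩

lemma gauss_sum (k : ℕ) : 2 * ∑ u ∈ Finset.Icc 1 k, u = k * (k + 1) := by
  induction k with
  | zero => simp
  | succ k ih =>
    rw [show Finset.Icc 1 (k + 1) = insert (k + 1) (Finset.Icc 1 k) by
      ext x; simp [Finset.mem_Icc]; omega,
      Finset.sum_insert (by simp [Finset.mem_Icc])]
    have h2 : (k + 1) * (k + 1 + 1) = k * (k + 1) + 2 * (k + 1) := by ring
    rw [h2, ← ih]
    ring

lemma card_EDomF (k : ℕ) : 2 * (EDomF k).card = k * (k + 1) := by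
  have hdisj : ∀ u ∈ Finset.Icc 1 k, ∀ u' ∈ Finset.Icc 1 k, u ≠ u' →
      Disjoint ((Finset.Icc (k + 1) (k + u)).image fun v => (u, v))
        ((Finset.Icc (k + 1) (k + u')).image fun v => (u', v)) := by
    intro u hu u' hu' huu
    simp only [Finset.disjoint_left]
    intro q hq hq'
    obtain ⟨v, hv, rfl⟩ := Finset.mem_image.mp hq
    obtain ⟨v', hv', h⟩ := Finset.mem_image.mp hq'
    have h2 := congrArg Prod.fst h
    simp only at h2
    exact huu h2.symm
  rw [EDomF, Finset.card_biUnion hdisj]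
  have himg : ∀ u : ℕ, ((Finset.Icc (k + 1) (k + u)).image fun v => (u, v)).card = u := by
    intro u
    rw [Finset.card_image_of_injective _ (fun a b hab => by simpa using congrArg Prod.snd hab),
      Nat.card_Icc]
    omega
  rw [Finset.sum_congr rfl fun u _ => himg u]
  exact gauss_sum k

lemma LO0_eq_of_pred_iff {n : ℕ} {T : Finset (Finset (ℕ × ℕ))}
    (h : ∀ A, (IsSaturatedStack n A ∧ A.card = (n - 1) / 2) ↔ A ∈ T) : LO0 n = T.card := by
  rw [LO0, Nat.card_congr (Equiv.subtypeEquivRight h), Nat.card_eq_finsetCard]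

theorem stmt10 :
    LO0 0 = 1 ∧
    (∀ n : ℕ, 1 ≤ n → Odd n → LO0 n = 1) ∧
    (∀ n : ℕ, 1 ≤ n → Even n → LO0 n = n * (n + 2) / 8) := by
  refine ⟨?_, ?_, ?_⟩
  · have h : ∀ A : Finset (ℕ × ℕ),
        (IsSaturatedStack 0 A ∧ A.card = (0 - 1) / 2) ↔ A ∈ ({∅} : Finset _) := by
      intro A
      rw [Finset.mem_singleton, sat_iff_opt]
      constructor
      · rintro ⟨hA, -⟩; exact stack_zero hA
      · rintro rfl
        exact ⟨⟨fun p hp => absurd hp (Finset.notMem_empty p),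
          fun p hp => absurd hp (Finset.notMem_empty p),
          fun p hp => absurd hp (Finset.notMem_empty p)⟩, by simp⟩
    rw [LO0_eq_of_pred_iff h, Finset.card_singleton]
  · rintro n hn ⟨k, rfl⟩
    have h : ∀ A : Finset (ℕ × ℕ),
        (IsSaturatedStack (2 * k + 1) A ∧ A.card = (2 * k + 1 - 1) / 2) ↔
          A ∈ ({fan (k + 1) k} : Finset _) := by
      intro A
      rw [Finset.mem_singleton, sat_iff_opt]
      constructor
      · exact fun hO => (classify (2 * k + 1)).1 k A rfl hO
      · rintro rfl; exact opt_fan k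
    rw [LO0_eq_of_pred_iff h, Finset.card_singleton]
  · rintro n hn ⟨k, rfl⟩
    have hk1 : 1 ≤ k := by omega
    have h : ∀ A : Finset (ℕ × ℕ),
        (IsSaturatedStack (k + k) A ∧ A.card = (k + k - 1) / 2) ↔
          A ∈ (EDomF k).image fun q => Estack k q.1 q.2 := by
      intro A
      rw [Finset.mem_image, sat_iff_opt]
      constructor
      · intro hO
        obtain ⟨u, v, hD, hAE⟩ :=
          (classify (k + k)).2 k A (by ring) hk1 hO
        exact ⟨(u, v), mem_EDomF.mpr hD, hAE.symm⟩
      · rintro ⟨q, hq, rfl⟩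
        have := opt_Estack (mem_EDomF.mp hq)
        rwa [show 2 * k = k + k by ring] at this
    rw [LO0_eq_of_pred_iff h]
    have hinj : Set.InjOn (fun q : ℕ × ℕ => Estack k q.1 q.2) (EDomF k) := by
      intro q hq q' hq' he
      have := Estack_inj (mem_EDomF.mp (by simpa using hq)) (mem_EDomF.mp (by simpa using hq')) he
      exact Prod.ext this.1 this.2
    rw [Finset.card_image_of_injOn hinj]
    have hcard2 := card_EDomF k
    have harith : (k + k) * (k + k + 2) = 4 * (k * (k + 1)) := by ring
    rw [harith]
    omega
end

section
/- Let LO_1(n) denote the number of saturated 2-regular simple stacks on [n] with exactly floor((n-1)/2) - 1 arcs. Then for n ≥ 3: if n is odd, LO_1(n) = (n-1)(n-3)(n^2 + 8n + 31)/192; if n is even, LO_1(n) = (n-2)(n-4)(n^4 + 12n^3 + 68n^2 - 288n - 2304)/9216. -/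
/-- The number of saturated 2-regular simple stacks on `[n]` with exactly
`⌊(n-1)/2⌋ - 1` arcs (1-saturated structures). -/
noncomputable def LO1 (n : ℕ) : ℕ :=
  Nat.card {A : Finset (ℕ × ℕ) // IsSaturatedStack n A ∧ A.card = (n - 1) / 2 - 1}

namespace SatAux

open Finset
open scoped Classical

/-- Arcs available inside the interval `[a,b]`. -/
def ArcsI (a b : ℕ) : Finset (ℕ × ℕ) :=
  (Finset.Icc a b ×ˢ Finset.Icc a b).filter fun p => p.1 + 2 ≤ p.2

/-- Stack condition on the interval `[a,b]`. -/
def IsStackI (a b : ℕ) (A : Finset (ℕ × ℕ)) : Prop :=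
  (∀ p ∈ A, a ≤ p.1 ∧ p.2 ≤ b ∧ p.1 + 2 ≤ p.2) ∧
  (∀ p ∈ A, ∀ q ∈ A, p ≠ q → p.1 ≠ q.1 ∧ p.1 ≠ q.2 ∧ p.2 ≠ q.1 ∧ p.2 ≠ q.2) ∧
  (∀ p ∈ A, ∀ q ∈ A, ¬(p.1 < q.1 ∧ q.1 < p.2 ∧ p.2 < q.2))

/-- Saturated stack condition on the interval `[a,b]`. -/
def IsSatI (a b : ℕ) (A : Finset (ℕ × ℕ)) : Prop :=
  IsStackI a b A ∧ ∀ p : ℕ × ℕ, p ∉ A → ¬ IsStackI a b (insert p A)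

/-- `v` is an endpoint of some arc of `A`. -/
def Matched (A : Finset (ℕ × ℕ)) (v : ℕ) : Prop := ∃ p ∈ A, p.1 = v ∨ p.2 = v

/-- Every unmatched vertex of `[a,b]` is covered by some arc. -/
def NoTopFree (a b : ℕ) (A : Finset (ℕ × ℕ)) : Prop :=
  ∀ v, a ≤ v → v ≤ b → ¬ Matched A v → ∃ p ∈ A, p.1 < v ∧ v < p.2

/-- A pair `(i,j)` that could be added to `A` keeping all constraints. -/
def Addable (a b : ℕ) (A : Finset (ℕ × ℕ)) (i j : ℕ) : Prop :=
  a ≤ i ∧ j ≤ b ∧ i + 2 ≤ j ∧ ¬ Matched A i ∧ ¬ Matched A j ∧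
  ∀ q ∈ A, ¬(i < q.1 ∧ q.1 < j ∧ j < q.2) ∧ ¬(q.1 < i ∧ i < q.2 ∧ q.2 < j)

/-- Saturated stacks on `[a,b]` with `k` arcs. -/
noncomputable def gset (a b k : ℕ) : Finset (Finset (ℕ × ℕ)) :=
  ((ArcsI a b).powerset).filter fun A => IsSatI a b A ∧ A.card = k

/-- Saturated stacks on `[a,b]` with `k` arcs and no top-face free vertex. -/
noncomputable def hset (a b k : ℕ) : Finset (Finset (ℕ × ℕ)) :=
  (gset a b k).filter fun A => NoTopFree a b A

section Basic
variable {a b k : ℕ} {A : Finset (ℕ × ℕ)} {p : ℕ × ℕ}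

lemma mem_ArcsI {a b : ℕ} {p : ℕ × ℕ} :
    p ∈ ArcsI a b ↔ a ≤ p.1 ∧ p.2 ≤ b ∧ p.1 + 2 ≤ p.2 := by
  simp only [ArcsI, mem_filter, mem_product, mem_Icc]
  omega

lemma stack_subset_ArcsI (h : IsStackI a b A) : A ⊆ ArcsI a b :=
  fun p hp => mem_ArcsI.2 (h.1 p hp)

lemma mem_gset : A ∈ gset a b k ↔ IsSatI a b A ∧ A.card = k := by
  classical
  simp only [gset, mem_filter, mem_powerset, and_iff_right_iff_imp]
  exact fun h => stack_subset_ArcsI h.1.1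

lemma mem_hset : A ∈ hset a b k ↔ (IsSatI a b A ∧ A.card = k) ∧ NoTopFree a b A := by
  classical
  simp only [hset, mem_filter, mem_gset]

lemma insert_stack_iff (h : IsStackI a b A) (hp : p ∉ A) :
    IsStackI a b (insert p A) ↔
      (a ≤ p.1 ∧ p.2 ≤ b ∧ p.1 + 2 ≤ p.2) ∧ ¬ Matched A p.1 ∧ ¬ Matched A p.2 ∧
      ∀ q ∈ A, ¬(p.1 < q.1 ∧ q.1 < p.2 ∧ p.2 < q.2) ∧ ¬(q.1 < p.1 ∧ p.1 < q.2 ∧ q.2 < p.2) := by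
  constructor
  · intro hs
    refine ⟨hs.1 p (mem_insert_self p A), ?_, ?_, ?_⟩
    · rintro ⟨q, hq, hq'⟩
      have hne : p ≠ q := fun h' => hp (h' ▸ hq)
      have h4 := hs.2.1 p (mem_insert_self p A) q (mem_insert_of_mem hq) hne
      rcases hq' with h'|h' <;> omega
    · rintro ⟨q, hq, hq'⟩
      have hne : p ≠ q := fun h' => hp (h' ▸ hq)
      have h4 := hs.2.1 p (mem_insert_self p A) q (mem_insert_of_mem hq) hne
      rcases hq' with h'|h' <;> omega
    · intro q hq
      exact ⟨hs.2.2 p (mem_insert_self _ _) q (mem_insert_of_mem hq),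
        hs.2.2 q (mem_insert_of_mem hq) p (mem_insert_self _ _)⟩
  · rintro ⟨hb, hm1, hm2, hnc⟩
    refine ⟨?_, ?_, ?_⟩
    · intro q hq
      rcases mem_insert.1 hq with rfl|hq
      · exact hb
      · exact h.1 q hq
    · intro x hx y hy hxy
      rcases mem_insert.1 hx with hx1|hx1
      · subst hx1
        rcases mem_insert.1 hy with hy1|hy1
        · exact absurd hy1.symm hxy
        · exact ⟨fun h' => hm1 ⟨y, hy1, Or.inl h'.symm⟩, fun h' => hm1 ⟨y, hy1, Or.inr h'.symm⟩,
            fun h' => hm2 ⟨y, hy1, Or.inl h'.symm⟩, fun h' => hm2 ⟨y, hy1, Or.inr h'.symm⟩⟩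
      · rcases mem_insert.1 hy with hy1|hy1
        · subst hy1
          exact ⟨fun h' => hm1 ⟨x, hx1, Or.inl h'⟩, fun h' => hm2 ⟨x, hx1, Or.inl h'⟩,
            fun h' => hm1 ⟨x, hx1, Or.inr h'⟩, fun h' => hm2 ⟨x, hx1, Or.inr h'⟩⟩
        · exact h.2.1 x hx1 y hy1 hxy
    · intro x hx y hy
      rcases mem_insert.1 hx with hx1|hx1
      · subst hx1
        rcases mem_insert.1 hy with hy1|hy1
        · subst hy1; omega
        · exact (hnc y hy1).1
      · rcases mem_insert.1 hy with hy1|hy1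
        · subst hy1; exact (hnc x hx1).2
        · exact h.2.2 x hx1 y hy1

lemma satI_iff : IsSatI a b A ↔ IsStackI a b A ∧ ∀ i j, ¬ Addable a b A i j := by
  constructor
  · rintro ⟨hs, hsat⟩
    refine ⟨hs, fun i j hadd => ?_⟩
    obtain ⟨h1, h2, h3, h4, h5, h6⟩ := hadd
    have hp : (i, j) ∉ A := fun hmem => h4 ⟨(i,j), hmem, Or.inl rfl⟩
    exact hsat (i, j) hp ((insert_stack_iff hs hp).2 ⟨⟨h1, h2, h3⟩, h4, h5, h6⟩)
  · rintro ⟨hs, hno⟩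
    refine ⟨hs, fun p hp hins => ?_⟩
    obtain ⟨hb, hm1, hm2, hnc⟩ := (insert_stack_iff hs hp).1 hins
    exact hno p.1 p.2 ⟨hb.1, hb.2.1, hb.2.2, hm1, hm2, hnc⟩

lemma two_mul_card_le (h : IsStackI a b A) : 2 * A.card ≤ b + 1 - a := by
  classical
  have hdisj : (A : Set (ℕ × ℕ)).PairwiseDisjoint (fun p => ({p.1, p.2} : Finset ℕ)) := by
    intro p hp q hq hne
    have h4 := h.2.1 p hp q hq hne
    simp only [Finset.disjoint_left, Finset.mem_insert, Finset.mem_singleton]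
    rintro x (rfl|rfl) (h'|h') <;> omega
  have hcard : (A.biUnion fun p => ({p.1, p.2} : Finset ℕ)).card = 2 * A.card := by
    rw [Finset.card_biUnion hdisj, Finset.sum_congr rfl (g := fun _ => 2)
      (fun p hp => by
        have := (h.1 p hp).2.2
        rw [Finset.card_insert_of_notMem (by simp; omega), Finset.card_singleton]),
      Finset.sum_const, smul_eq_mul, mul_comm]
  have hsub : (A.biUnion fun p => ({p.1, p.2} : Finset ℕ)) ⊆ Finset.Icc a b := by
    intro x hx
    simp only [Finset.mem_biUnion, Finset.mem_insert, Finset.mem_singleton] at hx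
    obtain ⟨p, hp, hx⟩ := hx
    have := h.1 p hp
    simp only [Finset.mem_Icc]
    omega
  have := Finset.card_le_card hsub
  rw [hcard, Nat.card_Icc] at this
  omega

lemma gset_vanish (hk : 1 ≤ k) (h : b + 1 < a + 2 * k) : gset a b k = ∅ := by
  rw [eq_empty_iff_forall_notMem]
  intro A hA
  obtain ⟨hsat, hcard⟩ := mem_gset.1 hA
  have := two_mul_card_le hsat.1
  omega

lemma hset_subset_gset : hset a b k ⊆ gset a b k := by
  classical
  exact filter_subset _ _

lemma hset_vanish (hk : 1 ≤ k) (h : b + 1 < a + 2 * k) : hset a b k = ∅ := by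
  have := hset_subset_gset (a := a) (b := b) (k := k)
  rw [gset_vanish hk h] at this
  exact subset_empty.1 this

lemma empty_stack : IsStackI a b (∅ : Finset (ℕ × ℕ)) := by
  refine ⟨?_, ?_, ?_⟩ <;> simp

lemma gset_zero_small (h : b ≤ a + 1) : gset a b 0 = {∅} := by
  ext A
  simp only [mem_gset, mem_singleton, Finset.card_eq_zero]
  constructor
  · rintro ⟨_, rfl⟩; rfl
  · rintro rfl
    refine ⟨satI_iff.2 ⟨empty_stack, fun i j hadd => ?_⟩, rfl⟩
    obtain ⟨h1, h2, h3, _⟩ := hadd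
    omega

lemma gset_zero_big (h : a + 2 ≤ b) : gset a b 0 = ∅ := by
  rw [eq_empty_iff_forall_notMem]
  intro A hA
  obtain ⟨hsat, hcard⟩ := mem_gset.1 hA
  rw [Finset.card_eq_zero] at hcard
  subst hcard
  exact (satI_iff.1 hsat).2 a (a+2)
    ⟨le_refl a, h, le_refl _, by simp [Matched], by simp [Matched], by simp⟩

lemma hset_zero (h : a ≤ b) : hset a b 0 = ∅ := by
  rw [eq_empty_iff_forall_notMem]
  intro A hA
  obtain ⟨⟨hsat, hcard⟩, hntf⟩ := mem_hset.1 hA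
  rw [Finset.card_eq_zero] at hcard
  subst hcard
  obtain ⟨p, hp, -⟩ := hntf a (le_refl a) h (by simp [Matched])
  simp at hp

lemma hset_zero_empty (h : b < a) : hset a b 0 = {∅} := by
  ext A
  rw [mem_hset]
  constructor
  · rintro ⟨⟨_, hcard⟩, _⟩
    simpa using Finset.card_eq_zero.1 hcard
  · intro hA
    rw [mem_singleton] at hA
    subst hA
    have : (∅ : Finset (ℕ × ℕ)) ∈ gset a b 0 := by
      rw [gset_zero_small (by omega)]; simp
    exact ⟨mem_gset.1 this, fun v hv hv' _ => by omega⟩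

end Basic

section Peel
variable {a b k : ℕ} {A : Finset (ℕ × ℕ)}

lemma addable_weaken {a' : ℕ} (ha : a ≤ a') {i j : ℕ}
    (h : Addable a' b A i j) : Addable a b A i j := by
  obtain ⟨h1, h2, h3, h4, h5, h6⟩ := h
  exact ⟨le_trans ha h1, h2, h3, h4, h5, h6⟩

lemma stack_lb (hstack : IsStackI a b A) (hMa : ¬ Matched A a) :
    ∀ p ∈ A, a + 1 ≤ p.1 := by
  intro p hp
  have h1 := (hstack.1 p hp).1
  rcases Nat.lt_or_ge p.1 (a+1) with h|h
  · exact absurd ⟨p, hp, Or.inl (by omega)⟩ hMa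
  · exact h

lemma hset_matched (hab : a ≤ b) (hA : A ∈ hset a b k) : Matched A a := by
  obtain ⟨⟨hsat, _⟩, hNTF⟩ := mem_hset.1 hA
  by_contra hMa
  obtain ⟨p, hp, h1, h2⟩ := hNTF a (le_refl a) hab hMa
  have := (hsat.1.1 p hp).1
  omega

lemma peel2 (hab : a + 1 ≤ b) :
    (gset a b k).filter (fun A => ¬ Matched A a ∧ ¬ Matched A (a+1)) = hset (a+2) b k := by
  classical
  ext A
  simp only [mem_filter, mem_gset, mem_hset]
  constructor
  · rintro ⟨⟨hsat, hcard⟩, hMa, hMa1⟩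
    obtain ⟨hstack, hnoadd⟩ := satI_iff.1 hsat
    have bound2 : ∀ p ∈ A, a + 2 ≤ p.1 := by
      intro p hp
      have h1 := stack_lb hstack hMa p hp
      rcases Nat.lt_or_ge p.1 (a+2) with h|h
      · exact absurd ⟨p, hp, Or.inl (by omega)⟩ hMa1
      · exact h
    have hstack2 : IsStackI (a+2) b A :=
      ⟨fun p hp => ⟨bound2 p hp, (hstack.1 p hp).2⟩, hstack.2.1, hstack.2.2⟩
    refine ⟨⟨satI_iff.2 ⟨hstack2, fun i j hadd => hnoadd i j (addable_weaken (by omega) hadd)⟩,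
      hcard⟩, ?_⟩
    intro v hv2 hvb hMv
    by_contra hno
    push_neg at hno
    refine hnoadd a v ⟨le_refl a, hvb, by omega, hMa, hMv, fun q hq => ⟨?_, ?_⟩⟩
    · intro ⟨_, hq2, hq3⟩
      have := hno q hq
      omega
    · have := bound2 q hq
      omega
  · rintro ⟨⟨hsat2, hcard⟩, hNTF⟩
    obtain ⟨hstack2, hnoadd2⟩ := satI_iff.1 hsat2
    have hMa : ¬ Matched A a := by
      rintro ⟨p, hp, hor⟩
      have h1 := (hstack2.1 p hp).1
      have h2 := (hstack2.1 p hp).2.2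
      omega
    have hMa1 : ¬ Matched A (a+1) := by
      rintro ⟨p, hp, hor⟩
      have h1 := (hstack2.1 p hp).1
      have h2 := (hstack2.1 p hp).2.2
      omega
    have hstack : IsStackI a b A :=
      ⟨fun p hp => ⟨by have := (hstack2.1 p hp).1; omega, (hstack2.1 p hp).2⟩,
        hstack2.2.1, hstack2.2.2⟩
    refine ⟨⟨satI_iff.2 ⟨hstack, fun i j hadd => ?_⟩, hcard⟩, hMa, hMa1⟩
    obtain ⟨hi, hj, hij, hMi, hMj, hnc⟩ := hadd
    rcases Nat.lt_or_ge i (a+2) with hia|hia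
    · -- i = a or a+1, so j ≥ a+2 and j is covered or top-free
      obtain ⟨q, hq, hq1, hq2⟩ := hNTF j (by omega) hj hMj
      have hqlb := (hstack2.1 q hq).1
      exact (hnc q hq).1 ⟨by omega, hq1, hq2⟩
    · exact hnoadd2 i j ⟨hia, hj, hij, hMi, hMj, hnc⟩

lemma peel1 (hab : a + 1 ≤ b) :
    (gset a b k).filter (fun A => ¬ Matched A a ∧ Matched A (a+1)) = hset (a+1) b k := by
  classical
  ext A
  simp only [mem_filter, mem_gset, mem_hset]
  constructor
  · rintro ⟨⟨hsat, hcard⟩, hMa, hMa1⟩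
    obtain ⟨hstack, hnoadd⟩ := satI_iff.1 hsat
    have bound1 := stack_lb hstack hMa
    have hstack1 : IsStackI (a+1) b A :=
      ⟨fun p hp => ⟨bound1 p hp, (hstack.1 p hp).2⟩, hstack.2.1, hstack.2.2⟩
    refine ⟨⟨satI_iff.2 ⟨hstack1, fun i j hadd => hnoadd i j (addable_weaken (by omega) hadd)⟩,
      hcard⟩, ?_⟩
    intro v hv1 hvb hMv
    have hv2 : a + 2 ≤ v := by
      rcases Nat.lt_or_ge v (a+2) with h|h
      · have : v = a + 1 := by omega
        exact absurd (this ▸ hMv) (not_not_intro hMa1)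
      · exact h
    by_contra hno
    push_neg at hno
    refine hnoadd a v ⟨le_refl a, hvb, by omega, hMa, hMv, fun q hq => ⟨?_, ?_⟩⟩
    · intro ⟨_, hq2, hq3⟩
      have := hno q hq
      omega
    · have := bound1 q hq
      omega
  · rintro ⟨⟨hsat1, hcard⟩, hNTF⟩
    obtain ⟨hstack1, hnoadd1⟩ := satI_iff.1 hsat1
    have hMa : ¬ Matched A a := by
      rintro ⟨p, hp, hor⟩
      have h1 := (hstack1.1 p hp).1
      have h2 := (hstack1.1 p hp).2.2
      omega
    have hMa1 : Matched A (a+1) := by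
      by_contra hM
      obtain ⟨q, hq, hq1, hq2⟩ := hNTF (a+1) (le_refl _) hab hM
      have := (hstack1.1 q hq).1
      omega
    have hstack : IsStackI a b A :=
      ⟨fun p hp => ⟨by have := (hstack1.1 p hp).1; omega, (hstack1.1 p hp).2⟩,
        hstack1.2.1, hstack1.2.2⟩
    refine ⟨⟨satI_iff.2 ⟨hstack, fun i j hadd => ?_⟩, hcard⟩, hMa, hMa1⟩
    obtain ⟨hi, hj, hij, hMi, hMj, hnc⟩ := hadd
    rcases Nat.lt_or_ge i (a+1) with hia|hia
    · obtain ⟨q, hq, hq1, hq2⟩ := hNTF j (by omega) hj hMj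
      have hqlb := (hstack1.1 q hq).1
      exact (hnc q hq).1 ⟨by omega, hq1, hq2⟩
    · exact hnoadd1 i j ⟨hia, hj, hij, hMi, hMj, hnc⟩

end Peel

section Split
variable {a b c k : ℕ} {A I R : Finset (ℕ × ℕ)}

lemma mem_insert_union {p : ℕ × ℕ} :
    p ∈ insert (a, c) (I ∪ R) ↔ p = (a, c) ∨ p ∈ I ∨ p ∈ R := by
  simp [Finset.mem_insert, Finset.mem_union]

lemma matched_mono {v : ℕ} (h : I ⊆ A) (hm : Matched I v) : Matched A v := by
  obtain ⟨p, hp, h'⟩ := hm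
  exact ⟨p, h hp, h'⟩

/-- Bounds of interior arcs, in `omega`-friendly form. -/
lemma ib (hI : I ⊆ ArcsI (a+1) (c-1)) (hc2 : a + 2 ≤ c) :
    ∀ p ∈ I, a + 1 ≤ p.1 ∧ p.2 < c ∧ p.1 + 2 ≤ p.2 := by
  intro p hp
  have := mem_ArcsI.1 (hI hp)
  omega

lemma rb (hR : R ⊆ ArcsI (c+1) b) :
    ∀ p ∈ R, c + 1 ≤ p.1 ∧ p.2 ≤ b ∧ p.1 + 2 ≤ p.2 := by
  intro p hp
  exact mem_ArcsI.1 (hR hp)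

lemma split_stack (hc2 : a + 2 ≤ c) (hcb : c ≤ b)
    (hI : I ⊆ ArcsI (a+1) (c-1)) (hR : R ⊆ ArcsI (c+1) b)
    (hIs : IsStackI (a+1) (c-1) I) (hRs : IsStackI (c+1) b R) :
    IsStackI a b (insert (a, c) (I ∪ R)) := by
  have hib := ib hI hc2
  have hrb := rb hR
  refine ⟨?_, ?_, ?_⟩
  · intro p hp
    rcases mem_insert_union.1 hp with rfl|hp|hp
    · simp; omega
    · have := hib p hp; omega
    · have := hrb p hp; omega
  · intro x hx y hy hxy
    rcases mem_insert_union.1 hx with hx1|hx1|hx1 <;>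
      rcases mem_insert_union.1 hy with hy1|hy1|hy1
    · exact absurd (hx1.trans hy1.symm) hxy
    · have := hib y hy1; subst hx1; simp at *; omega
    · have := hrb y hy1; subst hx1; simp at *; omega
    · have := hib x hx1; subst hy1; simp at *; omega
    · exact hIs.2.1 x hx1 y hy1 hxy
    · have h1 := hib x hx1; have h2 := hrb y hy1; omega
    · have := hrb x hx1; subst hy1; simp at *; omega
    · have h1 := hrb x hx1; have h2 := hib y hy1; omega
    · exact hRs.2.1 x hx1 y hy1 hxy
  · intro x hx y hy
    rcases mem_insert_union.1 hx with hx1|hx1|hx1 <;>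
      rcases mem_insert_union.1 hy with hy1|hy1|hy1
    · subst hx1; subst hy1; simp
    · have := hib y hy1; subst hx1; simp at *; omega
    · have := hrb y hy1; subst hx1; simp at *; omega
    · have := hib x hx1; subst hy1; simp at *; omega
    · exact hIs.2.2 x hx1 y hy1
    · have h1 := hib x hx1; have h2 := hrb y hy1; omega
    · have := hrb x hx1; subst hy1; simp at *; omega
    · have h1 := hrb x hx1; have h2 := hib y hy1; omega
    · exact hRs.2.2 x hx1 y hy1

lemma split_sat (hc2 : a + 2 ≤ c) (hcb : c ≤ b)
    (hI : I ⊆ ArcsI (a+1) (c-1)) (hR : R ⊆ ArcsI (c+1) b) :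
    IsSatI a b (insert (a, c) (I ∪ R)) ↔
      IsSatI (a+1) (c-1) I ∧ IsSatI (c+1) b R := by
  have hib := ib hI hc2
  have hrb := rb hR
  have hIsub : I ⊆ insert (a, c) (I ∪ R) := fun p hp => mem_insert_union.2 (Or.inr (Or.inl hp))
  have hRsub : R ⊆ insert (a, c) (I ∪ R) := fun p hp => mem_insert_union.2 (Or.inr (Or.inr hp))
  have hmac : Matched (insert (a, c) (I ∪ R)) a :=
    ⟨(a, c), mem_insert_union.2 (Or.inl rfl), Or.inl rfl⟩
  have hmc : Matched (insert (a, c) (I ∪ R)) c :=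
    ⟨(a, c), mem_insert_union.2 (Or.inl rfl), Or.inr rfl⟩
  rw [satI_iff, satI_iff, satI_iff]
  constructor
  · rintro ⟨hs, hno⟩
    have hIs : IsStackI (a+1) (c-1) I :=
      ⟨fun p hp => mem_ArcsI.1 (hI hp), fun x hx y hy hxy => hs.2.1 x (hIsub hx) y (hIsub hy) hxy,
        fun x hx y hy => hs.2.2 x (hIsub hx) y (hIsub hy)⟩
    have hRs : IsStackI (c+1) b R :=
      ⟨fun p hp => mem_ArcsI.1 (hR hp), fun x hx y hy hxy => hs.2.1 x (hRsub hx) y (hRsub hy) hxy,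
        fun x hx y hy => hs.2.2 x (hRsub hx) y (hRsub hy)⟩
    refine ⟨⟨hIs, fun i j hadd => ?_⟩, ⟨hRs, fun i j hadd => ?_⟩⟩
    · obtain ⟨hi, hj, hij, hMi, hMj, hnc⟩ := hadd
      refine hno i j ⟨by omega, by omega, hij, ?_, ?_, ?_⟩
      · rintro ⟨p, hp, hor⟩
        rcases mem_insert_union.1 hp with rfl|hp1|hp1
        · simp at hor; omega
        · exact hMi ⟨p, hp1, hor⟩
        · have := hrb p hp1; omega
      · rintro ⟨p, hp, hor⟩
        rcases mem_insert_union.1 hp with rfl|hp1|hp1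
        · simp at hor; omega
        · exact hMj ⟨p, hp1, hor⟩
        · have := hrb p hp1; omega
      · intro q hq
        rcases mem_insert_union.1 hq with rfl|hq1|hq1
        · simp; omega
        · exact hnc q hq1
        · have := hrb q hq1; omega
    · obtain ⟨hi, hj, hij, hMi, hMj, hnc⟩ := hadd
      refine hno i j ⟨by omega, hj, hij, ?_, ?_, ?_⟩
      · rintro ⟨p, hp, hor⟩
        rcases mem_insert_union.1 hp with rfl|hp1|hp1
        · simp at hor; omega
        · have := hib p hp1; omega
        · exact hMi ⟨p, hp1, hor⟩
      · rintro ⟨p, hp, hor⟩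
        rcases mem_insert_union.1 hp with rfl|hp1|hp1
        · simp at hor; omega
        · have := hib p hp1; omega
        · exact hMj ⟨p, hp1, hor⟩
      · intro q hq
        rcases mem_insert_union.1 hq with rfl|hq1|hq1
        · simp; omega
        · have := hib q hq1; omega
        · exact hnc q hq1
  · rintro ⟨⟨hIs, hnoI⟩, ⟨hRs, hnoR⟩⟩
    refine ⟨split_stack hc2 hcb hI hR hIs hRs, fun i j hadd => ?_⟩
    obtain ⟨hi, hj, hij, hMi, hMj, hnc⟩ := hadd
    have hia : a < i := by
      rcases Nat.lt_or_ge a i with h|h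
      · exact h
      · have : i = a := by omega
        exact absurd (this ▸ hMi) (not_not_intro hmac)
    have hic : i ≠ c := fun h => hMi (h ▸ hmc)
    have hjc : j ≠ c := fun h => hMj (h ▸ hmc)
    have hnac := hnc (a, c) (mem_insert_union.2 (Or.inl rfl))
    simp only at hnac
    rcases Nat.lt_or_ge i c with hiclt|hicgt
    · have hjlt : j < c := by omega
      refine hnoI i j ⟨by omega, by omega, hij, ?_, ?_, fun q hq => hnc q (hIsub hq)⟩
      · exact fun hm => hMi (matched_mono hIsub hm)
      · exact fun hm => hMj (matched_mono hIsub hm)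
    · have hicgt' : c < i := by omega
      refine hnoR i j ⟨by omega, hj, hij, ?_, ?_, fun q hq => hnc q (hRsub hq)⟩
      · exact fun hm => hMi (matched_mono hRsub hm)
      · exact fun hm => hMj (matched_mono hRsub hm)

lemma split_ntf (hc2 : a + 2 ≤ c) (hcb : c ≤ b)
    (hI : I ⊆ ArcsI (a+1) (c-1)) (hR : R ⊆ ArcsI (c+1) b) :
    NoTopFree a b (insert (a, c) (I ∪ R)) ↔ NoTopFree (c+1) b R := by
  have hib := ib hI hc2
  have hrb := rb hR
  have hRsub : R ⊆ insert (a, c) (I ∪ R) := fun p hp => mem_insert_union.2 (Or.inr (Or.inr hp))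
  constructor
  · intro hN v hv1 hv2 hMv
    have hMv' : ¬ Matched (insert (a, c) (I ∪ R)) v := by
      rintro ⟨p, hp, hor⟩
      rcases mem_insert_union.1 hp with rfl|hp1|hp1
      · simp at hor; omega
      · have := hib p hp1; omega
      · exact hMv ⟨p, hp1, hor⟩
    obtain ⟨p, hp, h1, h2⟩ := hN v (by omega) hv2 hMv'
    rcases mem_insert_union.1 hp with rfl|hp1|hp1
    · simp at h1 h2; omega
    · have := hib p hp1; omega
    · exact ⟨p, hp1, h1, h2⟩
  · intro hN v hv1 hv2 hMv
    have hva : v ≠ a := by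
      rintro rfl
      exact hMv ⟨(v, c), mem_insert_union.2 (Or.inl rfl), Or.inl rfl⟩
    have hvc : v ≠ c := by
      rintro rfl
      exact hMv ⟨(a, v), mem_insert_union.2 (Or.inl rfl), Or.inr rfl⟩
    rcases Nat.lt_or_ge v c with hvlt|hvgt
    · exact ⟨(a, c), mem_insert_union.2 (Or.inl rfl), by simp; omega⟩
    · have hMvR : ¬ Matched R v := fun hm => hMv (matched_mono hRsub hm)
      obtain ⟨p, hp, h1, h2⟩ := hN v (by omega) hv2 hMvR
      exact ⟨p, hRsub hp, h1, h2⟩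

lemma split_decomp (hs : IsStackI a b A) (hac : (a, c) ∈ A) (hc2 : a + 2 ≤ c) :
    A = insert (a, c) (A.filter (fun p => p.2 < c) ∪ A.filter (fun p => c < p.1)) ∧
    A.filter (fun p => p.2 < c) ⊆ ArcsI (a+1) (c-1) ∧
    A.filter (fun p => c < p.1) ⊆ ArcsI (c+1) b := by
  have key : ∀ p ∈ A, p ≠ (a, c) → (a + 1 ≤ p.1 ∧ p.2 < c) ∨ (c < p.1 ∧ p.2 ≤ b) := by
    intro p hp hne
    have hb := hs.1 p hp
    have hsimp := hs.2.1 p hp (a, c) hac hne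
    have hnc1 := hs.2.2 p hp (a, c) hac
    have hnc2 := hs.2.2 (a, c) hac p hp
    simp only at hsimp hnc1 hnc2
    omega
  refine ⟨?_, ?_, ?_⟩
  · ext p
    simp only [mem_insert_union, Finset.mem_filter]
    constructor
    · intro hp
      by_cases hne : p = (a, c)
      · exact Or.inl hne
      · rcases key p hp hne with h|h
        · exact Or.inr (Or.inl ⟨hp, h.2⟩)
        · exact Or.inr (Or.inr ⟨hp, h.1⟩)
    · rintro (rfl|⟨hp,_⟩|⟨hp,_⟩) <;> first | exact hac | exact hp
  · intro p hp
    rw [Finset.mem_filter] at hp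
    have hne : p ≠ (a, c) := by
      rintro rfl
      exact absurd hp.2 (by simp)
    have hb := hs.1 p hp.1
    rcases key p hp.1 hne with h|h
    · rw [mem_ArcsI]; omega
    · omega
  · intro p hp
    rw [Finset.mem_filter] at hp
    have hne : p ≠ (a, c) := by
      rintro rfl
      exact absurd hp.2 (by simp; omega)
    have hb := hs.1 p hp.1
    rcases key p hp.1 hne with h|h
    · omega
    · rw [mem_ArcsI]; omega

end Split

/-- `xset true = hset`, `xset false = gset`. -/
noncomputable def xset (fl : Bool) (a b k : ℕ) : Finset (Finset (ℕ × ℕ)) :=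
  bif fl then hset a b k else gset a b k

section Bij
variable {a b c k : ℕ} {A : Finset (ℕ × ℕ)}

lemma mem_xset {fl : Bool} :
    A ∈ xset fl a b k ↔ (IsSatI a b A ∧ A.card = k) ∧ (fl = true → NoTopFree a b A) := by
  cases fl <;> simp [xset, mem_gset, mem_hset]

lemma card_filter_arc (fl : Bool) (hc2 : a + 2 ≤ c) (hcb : c ≤ b) :
    ((xset fl a b k).filter (fun A => (a, c) ∈ A)).card
      = ∑ i ∈ Finset.range k, (gset (a+1) (c-1) i).card * (xset fl (c+1) b (k-1-i)).card := by
  classical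
  have hdisj : (↑(Finset.range k) : Set ℕ).PairwiseDisjoint
      (fun i => (gset (a+1) (c-1) i) ×ˢ (xset fl (c+1) b (k-1-i))) := by
    intro i _ j _ hij
    simp only [Finset.disjoint_left, Finset.mem_product]
    rintro x ⟨h1, _⟩ ⟨h2, _⟩
    exact hij ((mem_gset.1 h1).2.symm.trans (mem_gset.1 h2).2)
  rw [Finset.sum_congr rfl (fun i (_ : i ∈ Finset.range k) =>
        (Finset.card_product (gset (a+1) (c-1) i) (xset fl (c+1) b (k-1-i))).symm),
      ← Finset.card_biUnion hdisj]
  refine Finset.card_bij'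
    (fun A _ => (A.filter (fun p => p.2 < c), A.filter (fun p => c < p.1)))
    (fun x _ => insert (a, c) (x.1 ∪ x.2)) ?_ ?_ ?_ ?_
  · -- forward membership
    intro A hA
    rw [Finset.mem_filter] at hA
    obtain ⟨hx, hac⟩ := hA
    obtain ⟨⟨hsat, hcard⟩, hntf⟩ := mem_xset.1 hx
    obtain ⟨hdec, hIsub, hRsub⟩ := split_decomp hsat.1 hac hc2
    have hIRdisj : Disjoint (A.filter (fun p => p.2 < c)) (A.filter (fun p => c < p.1)) := by
      simp only [Finset.disjoint_left, Finset.mem_filter]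
      rintro p ⟨hp, h1⟩ ⟨_, h2⟩
      have := (hsat.1.1 p hp).2.2
      omega
    have hnm : (a, c) ∉ (A.filter (fun p => p.2 < c)) ∪ (A.filter (fun p => c < p.1)) := by
      simp only [Finset.mem_union, Finset.mem_filter]
      rintro (⟨_, h⟩|⟨_, h⟩)
      · exact absurd (h : c < c) (lt_irrefl c)
      · have h' : c < a := h
        omega
    have hcards : (A.filter (fun p => p.2 < c)).card + (A.filter (fun p => c < p.1)).card + 1 = k := by
      rw [hdec] at hcard
      rw [Finset.card_insert_of_notMem hnm, Finset.card_union_of_disjoint hIRdisj] at hcard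
      omega
    have hsat' := hsat
    rw [hdec] at hsat'
    obtain ⟨hsatI, hsatR⟩ := (split_sat hc2 hcb hIsub hRsub).1 hsat'
    simp only [Finset.mem_biUnion, Finset.mem_range, Finset.mem_product]
    refine ⟨(A.filter (fun p => p.2 < c)).card, by omega, mem_gset.2 ⟨hsatI, rfl⟩,
      mem_xset.2 ⟨⟨hsatR, by omega⟩, fun hfl => ?_⟩⟩
    have hntf' := hntf hfl
    rw [hdec] at hntf'
    exact (split_ntf hc2 hcb hIsub hRsub).1 hntf'
  · -- backward membership
    intro x hx
    simp only [Finset.mem_biUnion, Finset.mem_range, Finset.mem_product] at hx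
    obtain ⟨i, hik, hx1, hx2⟩ := hx
    obtain ⟨hsatI, hcardI⟩ := mem_gset.1 hx1
    obtain ⟨⟨hsatR, hcardR⟩, hntfR⟩ := mem_xset.1 hx2
    have hIsub : x.1 ⊆ ArcsI (a+1) (c-1) := stack_subset_ArcsI hsatI.1
    have hRsub : x.2 ⊆ ArcsI (c+1) b := stack_subset_ArcsI hsatR.1
    have hib' := ib hIsub hc2
    have hrb' := rb hRsub
    have hIRdisj : Disjoint x.1 x.2 := by
      simp only [Finset.disjoint_left]
      intro p h1 h2
      have := hib' p h1
      have := hrb' p h2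
      omega
    have hnm : (a, c) ∉ x.1 ∪ x.2 := by
      simp only [Finset.mem_union]
      rintro (h|h)
      · have := hib' _ h
        simp at this <;> omega
      · have := hrb' _ h
        simp at this <;> omega
    rw [Finset.mem_filter]
    refine ⟨mem_xset.2 ⟨⟨(split_sat hc2 hcb hIsub hRsub).2 ⟨hsatI, hsatR⟩, ?_⟩,
      fun hfl => (split_ntf hc2 hcb hIsub hRsub).2 (hntfR hfl)⟩, Finset.mem_insert_self _ _⟩
    rw [Finset.card_insert_of_notMem hnm, Finset.card_union_of_disjoint hIRdisj]
    omega
  · -- left inverse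
    intro A hA
    rw [Finset.mem_filter] at hA
    obtain ⟨hx, hac⟩ := hA
    obtain ⟨⟨hsat, _⟩, _⟩ := mem_xset.1 hx
    exact (split_decomp hsat.1 hac hc2).1.symm
  · -- right inverse
    intro x hx
    simp only [Finset.mem_biUnion, Finset.mem_range, Finset.mem_product] at hx
    obtain ⟨i, hik, hx1, hx2⟩ := hx
    have hib' := ib (stack_subset_ArcsI (mem_gset.1 hx1).1.1) hc2
    have hrb' := rb (stack_subset_ArcsI (mem_xset.1 hx2).1.1.1)
    have e1 : (insert (a, c) (x.1 ∪ x.2)).filter (fun p => p.2 < c) = x.1 := by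
      ext p
      simp only [Finset.mem_filter, Finset.mem_insert, Finset.mem_union]
      constructor
      · rintro ⟨rfl|hp|hp, h2⟩
        · simp at h2 <;> omega
        · exact hp
        · have := hrb' p hp; omega
      · intro hp
        have := hib' p hp
        exact ⟨Or.inr (Or.inl hp), by omega⟩
    have e2 : (insert (a, c) (x.1 ∪ x.2)).filter (fun p => c < p.1) = x.2 := by
      ext p
      simp only [Finset.mem_filter, Finset.mem_insert, Finset.mem_union]
      constructor
      · rintro ⟨rfl|hp|hp, h2⟩
        · simp at h2 <;> omega
        · have := hib' p hp; omega
        · exact hp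
      · intro hp
        have := hrb' p hp
        exact ⟨Or.inr (Or.inr hp), by omega⟩
    rw [Prod.ext_iff]
    exact ⟨e1, e2⟩

lemma card_filter_matched (fl : Bool) :
    ((xset fl a b k).filter (fun A => Matched A a)).card
      = ∑ c ∈ Finset.Icc (a+2) b,
          ((xset fl a b k).filter (fun A => (a, c) ∈ A)).card := by
  classical
  have heq : (xset fl a b k).filter (fun A => Matched A a)
      = (Finset.Icc (a+2) b).biUnion
          (fun c => (xset fl a b k).filter (fun A => (a, c) ∈ A)) := by
    ext A
    simp only [Finset.mem_filter, Finset.mem_biUnion, Finset.mem_Icc]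
    constructor
    · rintro ⟨hA, p, hp, hor⟩
      have hb := (mem_xset.1 hA).1.1.1.1 p hp
      have hp1 : p.1 = a := by omega
      refine ⟨p.2, by omega, hA, ?_⟩
      have : p = (a, p.2) := by
        rw [Prod.ext_iff]
        exact ⟨hp1, rfl⟩
      rwa [← this]
    · rintro ⟨c', _, hA, hac⟩
      exact ⟨hA, (a, c'), hac, Or.inl rfl⟩
  rw [heq]
  apply Finset.card_biUnion
  intro c1 hc1 c2 hc2 hne
  simp only [Finset.disjoint_left, Finset.mem_filter]
  rintro A ⟨hA, h1⟩ ⟨_, h2⟩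
  have hsimple := (mem_xset.1 hA).1.1.1.2.1 (a, c1) h1 (a, c2) h2
    (by simp [Prod.ext_iff]; exact hne)
  simp at hsimple

lemma hset_card_eq (hab : a ≤ b) :
    (hset a b k).card
      = ∑ c ∈ Finset.Icc (a+2) b, ∑ i ∈ Finset.range k,
          (gset (a+1) (c-1) i).card * (hset (c+1) b (k-1-i)).card := by
  classical
  have h2 : (xset true a b k).filter (fun A => Matched A a) = xset true a b k :=
    Finset.filter_true_of_mem (fun A hA => hset_matched hab hA)
  rw [show hset a b k = xset true a b k from rfl, ← h2, card_filter_matched]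
  refine Finset.sum_congr rfl (fun c hc => ?_)
  rw [Finset.mem_Icc] at hc
  rw [card_filter_arc true hc.1 hc.2]
  rfl

lemma gset_card_eq (hab : a + 1 ≤ b) :
    (gset a b k).card
      = (hset (a+1) b k).card + (hset (a+2) b k).card +
        ∑ c ∈ Finset.Icc (a+2) b, ∑ i ∈ Finset.range k,
          (gset (a+1) (c-1) i).card * (gset (c+1) b (k-1-i)).card := by
  classical
  have split1 : (gset a b k).card
      = ((gset a b k).filter (fun A => Matched A a)).card
        + ((gset a b k).filter (fun A => ¬ Matched A a)).card :=
    (Finset.card_filter_add_card_filter_not _).symm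
  have split2 : ((gset a b k).filter (fun A => ¬ Matched A a)).card
      = ((gset a b k).filter (fun A => ¬ Matched A a ∧ Matched A (a+1))).card
        + ((gset a b k).filter (fun A => ¬ Matched A a ∧ ¬ Matched A (a+1))).card := by
    rw [← Finset.filter_filter, ← Finset.filter_filter,
      Finset.card_filter_add_card_filter_not]
  have harc : ((gset a b k).filter (fun A => Matched A a)).card
      = ∑ c ∈ Finset.Icc (a+2) b, ∑ i ∈ Finset.range k,
          (gset (a+1) (c-1) i).card * (gset (c+1) b (k-1-i)).card := by
    have h0 : gset a b k = xset false a b k := by simp [xset]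
    rw [h0, card_filter_matched]
    refine Finset.sum_congr rfl (fun c hc => ?_)
    rw [Finset.mem_Icc] at hc
    rw [card_filter_arc false hc.1 hc.2]
    rfl
  rw [split1, split2, harc, peel1 hab, peel2 hab]
  ring

end Bij

section Models

/-- Polynomial part of the `g`-counts, by number of free vertices. -/
def Gp (f : ℕ) (x : ℚ) : ℚ :=
  if f = 1 then 1
  else if f = 2 then (x+1)*(x+2)/2
  else if f = 3 then x*(x+1)*(x^2+7*x+16)/12
  else if f = 4 then (x^6+15*x^5+91*x^4+213*x^3+52*x^2-84*x)/144
  else 0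

/-- Polynomial part of the `h`-counts, by number of free vertices. -/
def Hp (f : ℕ) (x : ℚ) : ℚ :=
  if f = 1 then 1
  else if f = 2 then (x^2+3*x-2)/2
  else if f = 3 then x*(x+1)*(x^2+7*x+16)/12 - (x^2+4*x-1)
  else if f = 4 then (x^6+15*x^5+67*x^4-27*x^3-500*x^2+588*x-144)/144
  else 0

/-- Model value of `(gset a b k).card` where the interval has length `2k+f`. -/
def Gm (f k : ℕ) : ℚ := if f = 0 then (if k = 0 then 1 else 0) else Gp f k

/-- Model value of `(hset a b k).card` where the interval has length `2k+f`. -/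
def Hm (f k : ℕ) : ℚ :=
  if k = 0 then (if f = 0 then 1 else 0) else if f = 0 then 0 else Hp f k

lemma Gm_ne {f : ℕ} (k : ℕ) (h : f ≠ 0) : Gm f k = Gp f k := if_neg h

lemma Hm_ne {f : ℕ} (k : ℕ) (hf : f ≠ 0) (hk : k ≠ 0) : Hm f k = Hp f k := by
  simp [Hm, hf, hk]

lemma Hm_zero {f : ℕ} (hf : f ≠ 0) : Hm f 0 = 0 := by simp [Hm, hf]

lemma Gm0 (k : ℕ) : Gm 0 k = if k = 0 then 1 else 0 := if_pos rfl

lemma Hm0 (k : ℕ) : Hm 0 k = if k = 0 then 1 else 0 := by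
  by_cases h : k = 0 <;> simp [Hm, h]

lemma sum_poly4 (c0 c1 c2 c3 c4 : ℚ) (n : ℕ) :
    ∑ i ∈ Finset.range n, (c0 + c1*(i:ℚ) + c2*(i:ℚ)^2 + c3*(i:ℚ)^3 + c4*(i:ℚ)^4)
      = c0*n + c1*((n:ℚ)^2-n)/2 + c2*(2*(n:ℚ)^3-3*(n:ℚ)^2+n)/6
        + c3*((n:ℚ)^4-2*(n:ℚ)^3+(n:ℚ)^2)/4
        + c4*(6*(n:ℚ)^5-15*(n:ℚ)^4+10*(n:ℚ)^3-n)/30 := by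
  induction n with
  | zero => simp
  | succ n ih =>
    rw [Finset.sum_range_succ, ih]
    push_cast
    ring

lemma sumGH {f1 f2 : ℕ} (h1 : f1 ≠ 0) (h2 : f2 ≠ 0) (m : ℕ) :
    ∑ i ∈ Finset.range (m+1), Gm f1 i * Hm f2 (m-i)
      = ∑ i ∈ Finset.range m, Gp f1 (i:ℚ) * Hp f2 ((m:ℚ) - (i:ℚ)) := by
  rw [Finset.sum_range_succ, Nat.sub_self, Hm_zero h2, mul_zero, add_zero]
  refine Finset.sum_congr rfl (fun i hi => ?_)
  have him : i < m := Finset.mem_range.1 hi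
  rw [Gm_ne _ h1, Hm_ne _ h2 (by omega)]
  congr 1
  rw [Nat.cast_sub (le_of_lt him)]

lemma sumGH0 {f1 : ℕ} (h1 : f1 ≠ 0) (m : ℕ) :
    ∑ i ∈ Finset.range (m+1), Gm f1 i * Hm 0 (m-i) = Gp f1 (m:ℚ) := by
  rw [Finset.sum_range_succ, Nat.sub_self]
  have h0 : Hm 0 0 = 1 := by simp [Hm]
  have hrest : ∑ i ∈ Finset.range m, Gm f1 i * Hm 0 (m-i) = 0 := by
    apply Finset.sum_eq_zero
    intro i hi
    have hne : m - i ≠ 0 := by have := Finset.mem_range.1 hi; omega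
    rw [Hm0, if_neg hne, mul_zero]
  rw [h0, mul_one, Gm_ne _ h1, hrest, zero_add]

lemma sumGG0 {f1 : ℕ} (h1 : f1 ≠ 0) (m : ℕ) :
    ∑ i ∈ Finset.range (m+1), Gm f1 i * Gm 0 (m-i) = Gp f1 (m:ℚ) := by
  rw [Finset.sum_range_succ, Nat.sub_self]
  have hrest : ∑ i ∈ Finset.range m, Gm f1 i * Gm 0 (m-i) = 0 := by
    apply Finset.sum_eq_zero
    intro i hi
    have hne : m - i ≠ 0 := by have := Finset.mem_range.1 hi; omega
    rw [Gm0, if_neg hne, mul_zero]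
  rw [Gm0, if_pos rfl, mul_one, Gm_ne _ h1, hrest, zero_add]

lemma sumGG {f1 f2 : ℕ} (h1 : f1 ≠ 0) (h2 : f2 ≠ 0) (m : ℕ) :
    ∑ i ∈ Finset.range (m+1), Gm f1 i * Gm f2 (m-i)
      = ∑ i ∈ Finset.range (m+1), Gp f1 (i:ℚ) * Gp f2 ((m:ℚ) - (i:ℚ)) := by
  refine Finset.sum_congr rfl (fun i hi => ?_)
  have him : i ≤ m := by have := Finset.mem_range.1 hi; omega
  rw [Gm_ne _ h1, Gm_ne _ h2]
  congr 1
  rw [Nat.cast_sub him]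

lemma sum_Icc11 (F : ℕ → ℚ) : ∑ x ∈ Finset.Icc 1 1, F x = F 1 := by
  rw [show Finset.Icc 1 1 = {1} from by decide, Finset.sum_singleton]

lemma sum_Icc12 (F : ℕ → ℚ) : ∑ x ∈ Finset.Icc 1 2, F x = F 1 + F 2 := by
  rw [show Finset.Icc 1 2 = insert 1 {2} from by decide,
    Finset.sum_insert (by decide), Finset.sum_singleton]

lemma sum_Icc13 (F : ℕ → ℚ) : ∑ x ∈ Finset.Icc 1 3, F x = F 1 + F 2 + F 3 := by
  rw [show Finset.Icc 1 3 = insert 1 (insert 2 {3}) from by decide,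
    Finset.sum_insert (by decide), Finset.sum_insert (by decide), Finset.sum_singleton]
  ring

lemma sum_Icc14 (F : ℕ → ℚ) : ∑ x ∈ Finset.Icc 1 4, F x = F 1 + F 2 + F 3 + F 4 := by
  rw [show Finset.Icc 1 4 = insert 1 (insert 2 (insert 3 {4})) from by decide,
    Finset.sum_insert (by decide), Finset.sum_insert (by decide),
    Finset.sum_insert (by decide), Finset.sum_singleton]
  ring


section Arith

lemma hsum0 (m : ℕ) :
    Hm 0 (m+1) = ∑ f1 ∈ Finset.Icc 1 0, ∑ i ∈ Finset.range (m+1), Gm f1 i * Hm (0 - f1) (m - i) := by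
  simp [Hm]

lemma hsum1 (m : ℕ) :
    Hm 1 (m+1) = ∑ f1 ∈ Finset.Icc 1 1, ∑ i ∈ Finset.range (m+1), Gm f1 i * Hm (1 - f1) (m - i) := by
  rw [sum_Icc11]
  show Hm 1 (m+1) = ((∑ i ∈ Finset.range (m+1), Gm 1 i * Hm 0 (m - i)))
  rw [sumGH0 (f1 := 1) (by norm_num) m]
  rw [Hm_ne _ (by norm_num) (Nat.succ_ne_zero m)]
  norm_num [Gp, Hp]
  try push_cast
  try ring

lemma hsum2 (m : ℕ) :
    Hm 2 (m+1) = ∑ f1 ∈ Finset.Icc 1 2, ∑ i ∈ Finset.range (m+1), Gm f1 i * Hm (2 - f1) (m - i) := by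
  rw [sum_Icc12]
  show Hm 2 (m+1) = ((∑ i ∈ Finset.range (m+1), Gm 1 i * Hm 1 (m - i)) + (∑ i ∈ Finset.range (m+1), Gm 2 i * Hm 0 (m - i)))
  rw [sumGH (f1 := 1) (f2 := 1) (by norm_num) (by norm_num) m,
      sumGH0 (f1 := 2) (by norm_num) m]
  rw [show (∑ i ∈ Finset.range m, Gp 1 (i:ℚ) * Hp 1 ((m:ℚ) - (i:ℚ)))
      = ∑ i ∈ Finset.range m, ((1) + (0)*(i:ℚ) + (0)*(i:ℚ)^2 + (0)*(i:ℚ)^3 + (0)*(i:ℚ)^4) from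
    Finset.sum_congr rfl (fun i _ => by norm_num [Gp, Hp]; try ring), sum_poly4]
  rw [Hm_ne _ (by norm_num) (Nat.succ_ne_zero m)]
  norm_num [Gp, Hp]
  try push_cast
  try ring

lemma hsum3 (m : ℕ) :
    Hm 3 (m+1) = ∑ f1 ∈ Finset.Icc 1 3, ∑ i ∈ Finset.range (m+1), Gm f1 i * Hm (3 - f1) (m - i) := by
  rw [sum_Icc13]
  show Hm 3 (m+1) = ((∑ i ∈ Finset.range (m+1), Gm 1 i * Hm 2 (m - i)) + (∑ i ∈ Finset.range (m+1), Gm 2 i * Hm 1 (m - i)) + (∑ i ∈ Finset.range (m+1), Gm 3 i * Hm 0 (m - i)))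
  rw [sumGH (f1 := 1) (f2 := 2) (by norm_num) (by norm_num) m,
      sumGH (f1 := 2) (f2 := 1) (by norm_num) (by norm_num) m,
      sumGH0 (f1 := 3) (by norm_num) m]
  rw [show (∑ i ∈ Finset.range m, Gp 1 (i:ℚ) * Hp 2 ((m:ℚ) - (i:ℚ)))
      = ∑ i ∈ Finset.range m, (((-1) + (3/2)*(m:ℚ) + (1/2)*(m:ℚ)^2) + (((-3)/2) + (-1)*(m:ℚ))*(i:ℚ) + ((1/2))*(i:ℚ)^2 + (0)*(i:ℚ)^3 + (0)*(i:ℚ)^4) from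
    Finset.sum_congr rfl (fun i _ => by norm_num [Gp, Hp]; try ring), sum_poly4]
  rw [show (∑ i ∈ Finset.range m, Gp 2 (i:ℚ) * Hp 1 ((m:ℚ) - (i:ℚ)))
      = ∑ i ∈ Finset.range m, ((1) + ((3/2))*(i:ℚ) + ((1/2))*(i:ℚ)^2 + (0)*(i:ℚ)^3 + (0)*(i:ℚ)^4) from
    Finset.sum_congr rfl (fun i _ => by norm_num [Gp, Hp]; try ring), sum_poly4]
  rw [Hm_ne _ (by norm_num) (Nat.succ_ne_zero m)]
  norm_num [Gp, Hp]
  try push_cast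
  try ring

lemma hsum4 (m : ℕ) :
    Hm 4 (m+1) = ∑ f1 ∈ Finset.Icc 1 4, ∑ i ∈ Finset.range (m+1), Gm f1 i * Hm (4 - f1) (m - i) := by
  rw [sum_Icc14]
  show Hm 4 (m+1) = ((∑ i ∈ Finset.range (m+1), Gm 1 i * Hm 3 (m - i)) + (∑ i ∈ Finset.range (m+1), Gm 2 i * Hm 2 (m - i)) + (∑ i ∈ Finset.range (m+1), Gm 3 i * Hm 1 (m - i)) + (∑ i ∈ Finset.range (m+1), Gm 4 i * Hm 0 (m - i)))
  rw [sumGH (f1 := 1) (f2 := 3) (by norm_num) (by norm_num) m,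
      sumGH (f1 := 2) (f2 := 2) (by norm_num) (by norm_num) m,
      sumGH (f1 := 3) (f2 := 1) (by norm_num) (by norm_num) m,
      sumGH0 (f1 := 4) (by norm_num) m]
  rw [show (∑ i ∈ Finset.range m, Gp 1 (i:ℚ) * Hp 3 ((m:ℚ) - (i:ℚ)))
      = ∑ i ∈ Finset.range m, ((1 + ((-8)/3)*(m:ℚ) + (11/12)*(m:ℚ)^2 + (2/3)*(m:ℚ)^3 + (1/12)*(m:ℚ)^4) + ((8/3) + ((-11)/6)*(m:ℚ) + (-2)*(m:ℚ)^2 + ((-1)/3)*(m:ℚ)^3)*(i:ℚ) + ((11/12) + 2*(m:ℚ) + (1/2)*(m:ℚ)^2)*(i:ℚ)^2 + (((-2)/3) + ((-1)/3)*(m:ℚ))*(i:ℚ)^3 + ((1/12))*(i:ℚ)^4) from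
    Finset.sum_congr rfl (fun i _ => by norm_num [Gp, Hp]; try ring), sum_poly4]
  rw [show (∑ i ∈ Finset.range m, Gp 2 (i:ℚ) * Hp 2 ((m:ℚ) - (i:ℚ)))
      = ∑ i ∈ Finset.range m, (((-1) + (3/2)*(m:ℚ) + (1/2)*(m:ℚ)^2) + ((-3) + (5/4)*(m:ℚ) + (3/4)*(m:ℚ)^2)*(i:ℚ) + (((-9)/4) + ((-3)/4)*(m:ℚ) + (1/4)*(m:ℚ)^2)*(i:ℚ)^2 + (((-1)/2)*(m:ℚ))*(i:ℚ)^3 + ((1/4))*(i:ℚ)^4) from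
    Finset.sum_congr rfl (fun i _ => by norm_num [Gp, Hp]; try ring), sum_poly4]
  rw [show (∑ i ∈ Finset.range m, Gp 3 (i:ℚ) * Hp 1 ((m:ℚ) - (i:ℚ)))
      = ∑ i ∈ Finset.range m, ((0) + ((4/3))*(i:ℚ) + ((23/12))*(i:ℚ)^2 + ((2/3))*(i:ℚ)^3 + ((1/12))*(i:ℚ)^4) from
    Finset.sum_congr rfl (fun i _ => by norm_num [Gp, Hp]; try ring), sum_poly4]
  rw [Hm_ne _ (by norm_num) (Nat.succ_ne_zero m)]
  norm_num [Gp, Hp]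
  try push_cast
  try ring

lemma gsum0 (m : ℕ) :
    Gm 0 (m+1) = (0:ℚ) + (0:ℚ) + ∑ f1 ∈ Finset.Icc 1 0, ∑ i ∈ Finset.range (m+1), Gm f1 i * Gm (0 - f1) (m - i) := by
  simp [Gm, Hm]

lemma gsum1 (m : ℕ) :
    Gm 1 (m+1) = Hm 0 (m+1) + (0:ℚ) + ∑ f1 ∈ Finset.Icc 1 1, ∑ i ∈ Finset.range (m+1), Gm f1 i * Gm (1 - f1) (m - i) := by
  rw [sum_Icc11]
  show Gm 1 (m+1) = Hm 0 (m+1) + (0:ℚ) + ((∑ i ∈ Finset.range (m+1), Gm 1 i * Gm 0 (m - i)))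
  rw [sumGG0 (f1 := 1) (by norm_num) m]
  rw [Gm_ne _ (by norm_num)]
  rw [Hm0, if_neg (Nat.succ_ne_zero m)]
  norm_num [Gp, Hp]
  try push_cast
  try ring

lemma gsum2 (m : ℕ) :
    Gm 2 (m+1) = Hm 1 (m+1) + Hm 0 (m+1) + ∑ f1 ∈ Finset.Icc 1 2, ∑ i ∈ Finset.range (m+1), Gm f1 i * Gm (2 - f1) (m - i) := by
  rw [sum_Icc12]
  show Gm 2 (m+1) = Hm 1 (m+1) + Hm 0 (m+1) + ((∑ i ∈ Finset.range (m+1), Gm 1 i * Gm 1 (m - i)) + (∑ i ∈ Finset.range (m+1), Gm 2 i * Gm 0 (m - i)))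
  rw [sumGG (f1 := 1) (f2 := 1) (by norm_num) (by norm_num) m,
      sumGG0 (f1 := 2) (by norm_num) m]
  rw [show (∑ i ∈ Finset.range (m+1), Gp 1 (i:ℚ) * Gp 1 ((m:ℚ) - (i:ℚ)))
      = ∑ i ∈ Finset.range (m+1), ((1) + (0)*(i:ℚ) + (0)*(i:ℚ)^2 + (0)*(i:ℚ)^3 + (0)*(i:ℚ)^4) from
    Finset.sum_congr rfl (fun i _ => by norm_num [Gp, Gp]; try ring), sum_poly4]
  rw [Gm_ne _ (by norm_num)]
  rw [Hm_ne _ (by norm_num) (Nat.succ_ne_zero m)]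
  rw [Hm0, if_neg (Nat.succ_ne_zero m)]
  norm_num [Gp, Hp]
  try push_cast
  try ring

lemma gsum3 (m : ℕ) :
    Gm 3 (m+1) = Hm 2 (m+1) + Hm 1 (m+1) + ∑ f1 ∈ Finset.Icc 1 3, ∑ i ∈ Finset.range (m+1), Gm f1 i * Gm (3 - f1) (m - i) := by
  rw [sum_Icc13]
  show Gm 3 (m+1) = Hm 2 (m+1) + Hm 1 (m+1) + ((∑ i ∈ Finset.range (m+1), Gm 1 i * Gm 2 (m - i)) + (∑ i ∈ Finset.range (m+1), Gm 2 i * Gm 1 (m - i)) + (∑ i ∈ Finset.range (m+1), Gm 3 i * Gm 0 (m - i)))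
  rw [sumGG (f1 := 1) (f2 := 2) (by norm_num) (by norm_num) m,
      sumGG (f1 := 2) (f2 := 1) (by norm_num) (by norm_num) m,
      sumGG0 (f1 := 3) (by norm_num) m]
  rw [show (∑ i ∈ Finset.range (m+1), Gp 1 (i:ℚ) * Gp 2 ((m:ℚ) - (i:ℚ)))
      = ∑ i ∈ Finset.range (m+1), ((1 + (3/2)*(m:ℚ) + (1/2)*(m:ℚ)^2) + (((-3)/2) + (-1)*(m:ℚ))*(i:ℚ) + ((1/2))*(i:ℚ)^2 + (0)*(i:ℚ)^3 + (0)*(i:ℚ)^4) from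
    Finset.sum_congr rfl (fun i _ => by norm_num [Gp, Gp]; try ring), sum_poly4]
  rw [show (∑ i ∈ Finset.range (m+1), Gp 2 (i:ℚ) * Gp 1 ((m:ℚ) - (i:ℚ)))
      = ∑ i ∈ Finset.range (m+1), ((1) + ((3/2))*(i:ℚ) + ((1/2))*(i:ℚ)^2 + (0)*(i:ℚ)^3 + (0)*(i:ℚ)^4) from
    Finset.sum_congr rfl (fun i _ => by norm_num [Gp, Gp]; try ring), sum_poly4]
  rw [Gm_ne _ (by norm_num)]
  rw [Hm_ne _ (by norm_num) (Nat.succ_ne_zero m)]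
  rw [Hm_ne (f := 1) _ (by norm_num) (Nat.succ_ne_zero m)]
  norm_num [Gp, Hp]
  try push_cast
  try ring

lemma gsum4 (m : ℕ) :
    Gm 4 (m+1) = Hm 3 (m+1) + Hm 2 (m+1) + ∑ f1 ∈ Finset.Icc 1 4, ∑ i ∈ Finset.range (m+1), Gm f1 i * Gm (4 - f1) (m - i) := by
  rw [sum_Icc14]
  show Gm 4 (m+1) = Hm 3 (m+1) + Hm 2 (m+1) + ((∑ i ∈ Finset.range (m+1), Gm 1 i * Gm 3 (m - i)) + (∑ i ∈ Finset.range (m+1), Gm 2 i * Gm 2 (m - i)) + (∑ i ∈ Finset.range (m+1), Gm 3 i * Gm 1 (m - i)) + (∑ i ∈ Finset.range (m+1), Gm 4 i * Gm 0 (m - i)))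
  rw [sumGG (f1 := 1) (f2 := 3) (by norm_num) (by norm_num) m,
      sumGG (f1 := 2) (f2 := 2) (by norm_num) (by norm_num) m,
      sumGG (f1 := 3) (f2 := 1) (by norm_num) (by norm_num) m,
      sumGG0 (f1 := 4) (by norm_num) m]
  rw [show (∑ i ∈ Finset.range (m+1), Gp 1 (i:ℚ) * Gp 3 ((m:ℚ) - (i:ℚ)))
      = ∑ i ∈ Finset.range (m+1), (((4/3)*(m:ℚ) + (23/12)*(m:ℚ)^2 + (2/3)*(m:ℚ)^3 + (1/12)*(m:ℚ)^4) + (((-4)/3) + ((-23)/6)*(m:ℚ) + (-2)*(m:ℚ)^2 + ((-1)/3)*(m:ℚ)^3)*(i:ℚ) + ((23/12) + 2*(m:ℚ) + (1/2)*(m:ℚ)^2)*(i:ℚ)^2 + (((-2)/3) + ((-1)/3)*(m:ℚ))*(i:ℚ)^3 + ((1/12))*(i:ℚ)^4) from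
    Finset.sum_congr rfl (fun i _ => by norm_num [Gp, Gp]; try ring), sum_poly4]
  rw [show (∑ i ∈ Finset.range (m+1), Gp 2 (i:ℚ) * Gp 2 ((m:ℚ) - (i:ℚ)))
      = ∑ i ∈ Finset.range (m+1), ((1 + (3/2)*(m:ℚ) + (1/2)*(m:ℚ)^2) + ((5/4)*(m:ℚ) + (3/4)*(m:ℚ)^2)*(i:ℚ) + (((-5)/4) + ((-3)/4)*(m:ℚ) + (1/4)*(m:ℚ)^2)*(i:ℚ)^2 + (((-1)/2)*(m:ℚ))*(i:ℚ)^3 + ((1/4))*(i:ℚ)^4) from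
    Finset.sum_congr rfl (fun i _ => by norm_num [Gp, Gp]; try ring), sum_poly4]
  rw [show (∑ i ∈ Finset.range (m+1), Gp 3 (i:ℚ) * Gp 1 ((m:ℚ) - (i:ℚ)))
      = ∑ i ∈ Finset.range (m+1), ((0) + ((4/3))*(i:ℚ) + ((23/12))*(i:ℚ)^2 + ((2/3))*(i:ℚ)^3 + ((1/12))*(i:ℚ)^4) from
    Finset.sum_congr rfl (fun i _ => by norm_num [Gp, Gp]; try ring), sum_poly4]
  rw [Gm_ne _ (by norm_num)]
  rw [Hm_ne _ (by norm_num) (Nat.succ_ne_zero m)]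
  rw [Hm_ne (f := 2) _ (by norm_num) (Nat.succ_ne_zero m)]
  norm_num [Gp, Hp]
  try push_cast
  try ring

end Arith

end Models

section Master

lemma sum_reduce (u : ℕ → ℕ → ℚ) {a b t k f : ℕ} (hb : b + 1 = a + t) (ht : t = 2*k + f)
    (hvan : ∀ c i, i < k → a + 2 ≤ c → c ≤ b →
      (c ≤ a + 1 + 2*i ∨ a + 1 + 2*i + f < c) → u c i = 0) :
    ∑ c ∈ Finset.Icc (a+2) b, ∑ i ∈ Finset.range k, u c i
      = ∑ f1 ∈ Finset.Icc 1 f, ∑ i ∈ Finset.range k, u (a+1+2*i+f1) i := by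
  rw [Finset.sum_comm, Finset.sum_comm (s := Finset.Icc 1 f)]
  refine Finset.sum_congr rfl (fun i hi => ?_)
  have hik : i < k := Finset.mem_range.1 hi
  have hsub : Finset.Icc (a+2+2*i) (a+1+2*i+f) ⊆ Finset.Icc (a+2) b := by
    intro c hc
    rw [Finset.mem_Icc] at *
    omega
  rw [← Finset.sum_subset hsub (fun c hc hnc => by
    rw [Finset.mem_Icc] at hc
    rw [Finset.mem_Icc] at hnc
    exact hvan c i hik hc.1 hc.2 (by omega))]
  have hmap : Finset.Icc (a+2+2*i) (a+1+2*i+f)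
      = Finset.map (addLeftEmbedding (a+1+2*i)) (Finset.Icc 1 f) := by
    rw [Finset.map_add_left_Icc]
    congr 1 <;> omega
  rw [hmap, Finset.sum_map]
  rfl

lemma master : ∀ t a b k f, b + 1 = a + t → t = 2*k + f → f ≤ 4 →
    ((gset a b k).card : ℚ) = Gm f k ∧ ((hset a b k).card : ℚ) = Hm f k := by
  intro t
  induction t using Nat.strong_induction_on with
  | _ t IH =>
  intro a b k f hb ht hf
  rcases Nat.eq_zero_or_pos k with rfl|hk
  · constructor
    · rcases Nat.lt_or_ge f 3 with hf3|hf3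
      · rw [gset_zero_small (by omega), Finset.card_singleton]
        interval_cases f <;> norm_num [Gm, Gp]
      · rw [gset_zero_big (by omega), Finset.card_empty]
        interval_cases f <;> norm_num [Gm, Gp]
    · rcases Nat.eq_zero_or_pos f with rfl|hf1
      · rw [hset_zero_empty (by omega), Finset.card_singleton]
        norm_num [Hm]
      · rw [hset_zero (by omega), Finset.card_empty, Hm_zero (by omega)]
        norm_num
  · -- k ≥ 1
    have hkne : k ≠ 0 := by omega
    obtain ⟨m, rfl⟩ := Nat.exists_eq_succ_of_ne_zero hkne
    set k := m + 1 with hkdef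
    have ht2 : 2 ≤ t := by omega
    have hab1 : a + 1 ≤ b := by omega
    have hab : a ≤ b := by omega
    -- vanishing for off-diagonal terms (h version)
    have hvan : ∀ (X : ℕ → ℕ → ℕ → Finset (Finset (ℕ×ℕ))),
        (∀ a' b' k', 1 ≤ k' → b' + 1 < a' + 2*k' → X a' b' k' = ∅) →
        ∀ c i, i < k → a + 2 ≤ c → c ≤ b →
        (c ≤ a + 1 + 2*i ∨ a + 1 + 2*i + f < c) →
        ((gset (a+1) (c-1) i).card : ℚ) * ((X (c+1) b (k-1-i)).card : ℚ) = 0 := by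
      intro X hXvan c i hik hc1 hc2 hor
      rcases hor with hor|hor
      · have hi1 : 1 ≤ i := by omega
        rcases Nat.lt_or_ge c (a+1+2*i) with hlt|hge
        · rw [gset_vanish hi1 (by omega), Finset.card_empty]
          norm_num
        · have hceq : c = a + 1 + 2*i := by omega
          have := (IH (2*i) (by omega) (a+1) (c-1) i 0 (by omega) (by omega) (by omega)).1
          rw [this, Gm0, if_neg (by omega)]
          norm_num
      · have hrest : k - 1 - i ≥ 1 := by omega
        rw [hXvan (c+1) b (k-1-i) hrest (by omega), Finset.card_empty]
        norm_num
    -- diagonal terms via IH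
    have hterm : ∀ (fl : Bool), ∀ f1 ∈ Finset.Icc 1 f, ∀ i ∈ Finset.range k,
        ((gset (a+1) (a+1+2*i+f1-1) i).card : ℚ) * ((xset fl (a+1+2*i+f1+1) b (k-1-i)).card : ℚ)
          = Gm f1 i * (if fl then Hm (f-f1) (k-1-i) else Gm (f-f1) (k-1-i)) := by
      intro fl f1 hf1 i hi
      rw [Finset.mem_Icc] at hf1
      rw [Finset.mem_range] at hi
      have h1 : ((gset (a+1) (a+1+2*i+f1-1) i).card : ℚ) = Gm f1 i :=
        (IH (2*i+f1) (by omega) (a+1) (a+1+2*i+f1-1) i f1 (by omega) (by omega) (by omega)).1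
      have h2g := (IH (t-(2*i+f1)-2) (by omega) (a+1+2*i+f1+1) b (k-1-i) (f-f1)
        (by omega) (by omega) (by omega))
      rw [h1]
      cases fl
      · rw [show xset false (a+1+2*i+f1+1) b (k-1-i) = gset (a+1+2*i+f1+1) b (k-1-i) from rfl,
          h2g.1]
        simp
      · rw [show xset true (a+1+2*i+f1+1) b (k-1-i) = hset (a+1+2*i+f1+1) b (k-1-i) from rfl,
          h2g.2]
        simp
    have hHm : ((hset a b k).card : ℚ) = Hm f k := by
      rw [hset_card_eq hab]
      push_cast
      rw [sum_reduce (fun c i => ((gset (a+1) (c-1) i).card : ℚ) * ((hset (c+1) b (k-1-i)).card : ℚ))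
        hb ht (hvan hset (fun a' b' k' h1 h2 => hset_vanish h1 h2))]
      rw [Finset.sum_congr rfl (fun f1 hf1 => Finset.sum_congr rfl (fun i hi => by
        have := hterm true f1 hf1 i hi
        simpa [xset] using this))]
      simp only [hkdef, Nat.add_sub_cancel]
      interval_cases f
      · exact (hsum0 m).symm
      · exact (hsum1 m).symm
      · exact (hsum2 m).symm
      · exact (hsum3 m).symm
      · exact (hsum4 m).symm
    have hGm : ((gset a b k).card : ℚ) = Gm f k := by
      rw [gset_card_eq hab1]
      push_cast
      have hhead1 : ((hset (a+1) b k).card : ℚ) = (if f = 0 then 0 else Hm (f-1) k) := by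
        rcases Nat.eq_zero_or_pos f with rfl|hf1
        · rw [hset_vanish (by omega) (by omega), Finset.card_empty]
          norm_num
        · rw [(IH (t-1) (by omega) (a+1) b k (f-1) (by omega) (by omega) (by omega)).2,
            if_neg (by omega)]
      have hhead2 : ((hset (a+2) b k).card : ℚ) = (if f ≤ 1 then 0 else Hm (f-2) k) := by
        rcases Nat.lt_or_ge f 2 with hf1|hf1
        · rw [hset_vanish (by omega) (by omega), Finset.card_empty]
          rw [if_pos (by omega)]
          norm_num
        · rw [(IH (t-2) (by omega) (a+2) b k (f-2) (by omega) (by omega) (by omega)).2,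
            if_neg (by omega)]
      rw [hhead1, hhead2]
      rw [sum_reduce (fun c i => ((gset (a+1) (c-1) i).card : ℚ) * ((gset (c+1) b (k-1-i)).card : ℚ))
        hb ht (hvan gset (fun a' b' k' h1 h2 => gset_vanish h1 h2))]
      rw [Finset.sum_congr rfl (fun f1 hf1 => Finset.sum_congr rfl (fun i hi => by
        have := hterm false f1 hf1 i hi
        simpa [xset] using this))]
      simp only [hkdef, Nat.add_sub_cancel]
      interval_cases f
      · simpa using (gsum0 m).symm
      · simpa using (gsum1 m).symm
      · simpa using (gsum2 m).symm
      · simpa using (gsum3 m).symm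
      · simpa using (gsum4 m).symm
    exact ⟨hGm, hHm⟩

end Master

lemma LO1_eq (n : ℕ) : LO1 n = (gset 1 n ((n-1)/2-1)).card := by
  rw [LO1]
  have he : ∀ A : Finset (ℕ × ℕ),
      (IsSaturatedStack n A ∧ A.card = (n-1)/2-1) ↔ A ∈ gset 1 n ((n-1)/2-1) := by
    intro A
    rw [mem_gset]
    exact Iff.rfl
  rw [Nat.card_congr (Equiv.subtypeEquivRight he), Nat.card_eq_fintype_card,
    Fintype.card_coe]

end SatAux

theorem stmt13 (n : ℕ) (hn : 3 ≤ n) :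
    (Odd n →
      (LO1 n : ℚ) = ((n : ℚ) - 1) * ((n : ℚ) - 3) * ((n : ℚ) ^ 2 + 8 * n + 31) / 192) ∧
    (Even n →
      (LO1 n : ℚ) = ((n : ℚ) - 2) * ((n : ℚ) - 4) *
        ((n : ℚ) ^ 4 + 12 * (n : ℚ) ^ 3 + 68 * (n : ℚ) ^ 2 - 288 * n - 2304) / 9216) := by
  constructor
  · intro hodd
    obtain ⟨j, hj⟩ := hodd
    have hm : ∃ m, n = 2*m + 3 := ⟨j - 1, by omega⟩
    obtain ⟨m, hnm⟩ := hm
    have hk : (n-1)/2 - 1 = m := by omega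
    rw [SatAux.LO1_eq, hk,
      (SatAux.master n 1 n m 3 (by omega) (by omega) (by omega)).1,
      SatAux.Gm_ne _ (by norm_num)]
    have hn' : (n : ℚ) = 2*(m:ℚ) + 3 := by
      rw [hnm]; push_cast; ring
    rw [hn']
    norm_num [SatAux.Gp]
    ring
  · intro heven
    obtain ⟨j, hj⟩ := heven
    have hm : ∃ m, n = 2*m + 4 := ⟨j - 2, by omega⟩
    obtain ⟨m, hnm⟩ := hm
    have hk : (n-1)/2 - 1 = m := by omega
    rw [SatAux.LO1_eq, hk,
      (SatAux.master n 1 n m 4 (by omega) (by omega) (by omega)).1,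
      SatAux.Gm_ne _ (by norm_num)]
    have hn' : (n : ℚ) = 2*(m:ℚ) + 4 := by
      rw [hnm]; push_cast; ring
    rw [hn']
    norm_num [SatAux.Gp]
    ring
end

section
/- The total number of saturated extended 2-regular simple stacks with n = 6 vertices and k = 3 arcs equals 3, and with n = 8 vertices and k = 3 arcs equals 46. -/
/-- The degree of vertex `v` in the arc set `A`. -/
def arcDegree (A : Finset (ℕ × ℕ)) (v : ℕ) : ℕ :=
  (A.filter (fun p => p.1 = v ∨ p.2 = v)).card

/-- An extended 2-regular simple stack on `[n]`: arcs `(i,j)` with `1 ≤ i`, `j ≤ n`,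
`j - i ≥ 2`, noncrossing, each internal vertex `2,…,n-1` of degree at most 1, and the
terminal vertices `1` and `n` of degree at most 2. -/
def IsExtStack (n : ℕ) (A : Finset (ℕ × ℕ)) : Prop :=
  (∀ p ∈ A, 1 ≤ p.1 ∧ p.2 ≤ n ∧ p.1 + 2 ≤ p.2) ∧
  (∀ p ∈ A, ∀ q ∈ A, ¬(p.1 < q.1 ∧ q.1 < p.2 ∧ p.2 < q.2)) ∧
  (∀ v : ℕ, 1 < v → v < n → arcDegree A v ≤ 1) ∧
  arcDegree A 1 ≤ 2 ∧ arcDegree A n ≤ 2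

/-- An extended stack is saturated if no arc can be added while keeping all
constraints. -/
def IsSaturatedExtStack (n : ℕ) (A : Finset (ℕ × ℕ)) : Prop :=
  IsExtStack n A ∧ ∀ p : ℕ × ℕ, p ∉ A → ¬ IsExtStack n (insert p A)

/-- Bounded (decidable) version of `IsExtStack`. -/
def extStackB (n : ℕ) (A : Finset (ℕ × ℕ)) : Prop :=
  (∀ p ∈ A, 1 ≤ p.1 ∧ p.2 ≤ n ∧ p.1 + 2 ≤ p.2) ∧
  (∀ p ∈ A, ∀ q ∈ A, ¬(p.1 < q.1 ∧ q.1 < p.2 ∧ p.2 < q.2)) ∧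
  (∀ v ∈ Finset.range (n+1), 1 < v → v < n → arcDegree A v ≤ 1) ∧
  arcDegree A 1 ≤ 2 ∧ arcDegree A n ≤ 2

instance (n : ℕ) (A : Finset (ℕ × ℕ)) : Decidable (extStackB n A) := by
  unfold extStackB; infer_instance

/-- All possible arcs on `[n]`. -/
def arcU (n : ℕ) : Finset (ℕ × ℕ) :=
  (Finset.range (n+1) ×ˢ Finset.range (n+1)).filter
    (fun p => 1 ≤ p.1 ∧ p.2 ≤ n ∧ p.1 + 2 ≤ p.2)

/-- Bounded (decidable) version of `IsSaturatedExtStack`. -/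
def satB (n : ℕ) (A : Finset (ℕ × ℕ)) : Prop :=
  extStackB n A ∧ ∀ p ∈ arcU n, p ∉ A → ¬ extStackB n (insert p A)

instance (n : ℕ) (A : Finset (ℕ × ℕ)) : Decidable (satB n A) := by
  unfold satB; infer_instance

lemma extStack_iff (n : ℕ) (A : Finset (ℕ × ℕ)) : IsExtStack n A ↔ extStackB n A := by
  constructor
  · rintro ⟨h1, h2, h3, h4, h5⟩
    exact ⟨h1, h2, fun v _ hv hvn => h3 v hv hvn, h4, h5⟩
  · rintro ⟨h1, h2, h3, h4, h5⟩
    refine ⟨h1, h2, fun v hv hvn => ?_, h4, h5⟩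
    exact h3 v (Finset.mem_range.mpr (hvn.trans (Nat.lt_succ_self n))) hv hvn

lemma subset_arcU {n : ℕ} {A : Finset (ℕ × ℕ)}
    (h : ∀ p ∈ A, 1 ≤ p.1 ∧ p.2 ≤ n ∧ p.1 + 2 ≤ p.2) : A ⊆ arcU n := by
  intro p hp
  obtain ⟨h1, h2, h3⟩ := h p hp
  refine Finset.mem_filter.mpr ⟨Finset.mem_product.mpr ⟨?_, ?_⟩, h1, h2, h3⟩
  · exact Finset.mem_range.mpr (Nat.lt_succ_of_le ((Nat.le_add_right _ 2).trans (h3.trans h2)))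
  · exact Finset.mem_range.mpr (Nat.lt_succ_of_le h2)

lemma sat_iff (n : ℕ) (A : Finset (ℕ × ℕ)) :
    IsSaturatedExtStack n A ↔ satB n A := by
  constructor
  · rintro ⟨h1, h2⟩
    refine ⟨(extStack_iff n A).mp h1, fun p _ hp hins => ?_⟩
    exact h2 p hp ((extStack_iff n _).mpr hins)
  · rintro ⟨h1, h2⟩
    refine ⟨(extStack_iff n A).mpr h1, fun p hp hins => ?_⟩
    have hpU : p ∈ arcU n :=
      subset_arcU hins.1 (Finset.mem_insert_self p A)
    exact h2 p hpU hp ((extStack_iff n _).mp hins)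

lemma mem_filter_iff (n k : ℕ) (A : Finset (ℕ × ℕ)) :
    (IsSaturatedExtStack n A ∧ A.card = k) ↔
      A ∈ ((arcU n).powersetCard k).filter (satB n) := by
  rw [Finset.mem_filter, Finset.mem_powersetCard, sat_iff]
  constructor
  · rintro ⟨hs, hc⟩
    exact ⟨⟨subset_arcU hs.1.1, hc⟩, hs⟩
  · rintro ⟨⟨_, hc⟩, hs⟩
    exact ⟨hs, hc⟩

lemma card_eq (n k : ℕ) :
    Nat.card {A : Finset (ℕ × ℕ) // IsSaturatedExtStack n A ∧ A.card = k} =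
      (((arcU n).powersetCard k).filter (satB n)).card := by
  rw [Nat.card_congr (Equiv.subtypeEquivRight (mem_filter_iff n k)),
    Nat.card_eq_fintype_card, Fintype.card_coe]

set_option maxRecDepth 100000 in
set_option maxHeartbeats 1000000 in
lemma count6 : (((arcU 6).powersetCard 3).filter (satB 6)).card = 3 := by decide

set_option maxRecDepth 100000 in
set_option maxHeartbeats 8000000 in
lemma count8 : (((arcU 8).powersetCard 3).filter (satB 8)).card = 46 := by decide

theorem stmt18 :
    Nat.card {A : Finset (ℕ × ℕ) // IsSaturatedExtStack 6 A ∧ A.card = 3} = 3 ∧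
    Nat.card {A : Finset (ℕ × ℕ) // IsSaturatedExtStack 8 A ∧ A.card = 3} = 46 := by
  rw [card_eq, card_eq]
  exact ⟨count6, count8⟩
end
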